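/- arXiv:2306.08283 — 13 statements merged into one kernel-verified Lean document; each statement's English description precedes it below -/
import Mathlib

section
/- Assume the pay-off function μ is convex. Let w and x be elements of 𝓛 \ {⊥} such that x ≰ w, and let u, t ∈ 𝓛 satisfy u ≤ x ⊓ w and x ⊔ w ≤ t. Then μ_A(u,x) ≤ μ_max(x ⊓ w, x) ≤ μ_max(w,t), and moreover μ_A(u,x) ≤ μ_A(w, x ⊔ w). -/
variable {L : Type*} {S : Type*}

/-- `μ_max(a,y) := sup { μ(a,b) | b ∈ 𝓛, a < b ≤ y }`. -/
def muMax [Preorder L] [CompleteLattice S] (μ : L → L → S) (a y : L) : S :=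
  ⨆ b ∈ {b : L | a < b ∧ b ≤ y}, μ a b

/-- `μ_A(x,y) := inf { μ_max(a,y) | a ∈ 𝓛, x ≤ a < y }`. -/
def muA [Preorder L] [CompleteLattice S] (μ : L → L → S) (x y : L) : S :=
  ⨅ a ∈ {a : L | x ≤ a ∧ a < y}, muMax μ a y

/-- The pay-off function `μ` is convex if `μ(x ⊓ y, x) ≤ μ(y, x ⊔ y)` whenever `x ≰ y`. -/
def ConvexPayoff [Lattice L] [CompleteLattice S] (μ : L → L → S) : Prop :=
  ∀ x y : L, ¬ x ≤ y → μ (x ⊓ y) x ≤ μ y (x ⊔ y)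

theorem stmt0 [Lattice L] [BoundedOrder L] [CompleteLattice S]
    (hbt : (⊥ : L) ≠ ⊤) (μ : L → L → S) (hconv : ConvexPayoff μ)
    (w x u t : L) (hw : w ≠ ⊥) (hx : x ≠ ⊥) (hxw : ¬ x ≤ w)
    (hu : u ≤ x ⊓ w) (ht : x ⊔ w ≤ t) :
    muA μ u x ≤ muMax μ (x ⊓ w) x ∧ muMax μ (x ⊓ w) x ≤ muMax μ w t ∧
      muA μ u x ≤ muA μ w (x ⊔ w) := by
  have key : ∀ a s : L, ¬ x ≤ a → u ≤ x ⊓ a → x ⊔ a ≤ s →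
      muA μ u x ≤ muMax μ (x ⊓ a) x ∧ muMax μ (x ⊓ a) x ≤ muMax μ a s := by
    intro a s hxa hua hs
    constructor
    · apply biInf_le (f := fun b => muMax μ b x)
      exact ⟨hua, lt_of_le_of_ne inf_le_left (fun h => hxa (h ▸ inf_le_right))⟩
    · apply iSup₂_le
      intro b ⟨hb1, hb2⟩
      have hba : ¬ b ≤ a := fun h => hb1.not_ge (le_inf hb2 h)
      have hinf : b ⊓ a = x ⊓ a :=
        le_antisymm (inf_le_inf_right a hb2) (le_inf hb1.le inf_le_right)
      have := hconv b a hba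
      rw [hinf] at this
      refine this.trans ?_
      apply le_biSup (f := fun c => μ a c)
      exact ⟨lt_of_le_of_ne le_sup_right (fun h => hba (h ▸ le_sup_left)),
        (sup_le (hb2.trans le_sup_left) le_sup_right).trans (sup_comm a x ▸ hs)⟩
  obtain ⟨h1, h2⟩ := key w t hxw hu ht
  refine ⟨h1, h2, ?_⟩
  apply le_iInf₂
  intro a ⟨ha1, ha2⟩
  have hxa : ¬ x ≤ a := fun h => ha2.not_ge (sup_le h ha1)
  obtain ⟨k1, k2⟩ := key a (x ⊔ w) hxa (hu.trans (inf_le_inf_left x ha1)) (sup_le le_sup_left ha2.le)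
  exact k1.trans k2
end

section
/- Let x, y, z ∈ 𝓛 with x < y < z. Then μ_A(y,z) ≥ μ_A(x,z). If moreover the pay-off function μ is convex, then: (a) μ_A(x,z) ≥ inf{μ_A(x,y), μ_A(y,z)}; (b) if μ_A(x,y) ≥ μ_A(y,z) then μ_A(y,z) = μ_A(x,z), and if μ_A(x,y) < μ_A(y,z) then μ_A(x,y) ≤ μ_A(x,z) ≤ μ_A(y,z); (c) if μ_A(x,y) and μ_A(y,z) are comparable in S, or if there exists a ∈ 𝓛 with x ≤ a < z and μ_A(x,z) = μ_max(a,z), then either μ_A(y,z) = μ_A(x,z), or μ_A(x,y) ≤ μ_A(x,z) < μ_A(y,z). -/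
variable {L : Type*} {S : Type*}

theorem stmt1 [Lattice L] [BoundedOrder L] [CompleteLattice S]
    (hbt : (⊥ : L) ≠ ⊤) (μ : L → L → S)
    (x y z : L) (hxy : x < y) (hyz : y < z) :
    muA μ x z ≤ muA μ y z ∧
    (ConvexPayoff μ →
      -- (a)
      muA μ x y ⊓ muA μ y z ≤ muA μ x z ∧
      -- (b)
      (muA μ y z ≤ muA μ x y → muA μ y z = muA μ x z) ∧
      (muA μ x y < muA μ y z → muA μ x y ≤ muA μ x z ∧ muA μ x z ≤ muA μ y z) ∧
      -- (c)
      (((muA μ x y ≤ muA μ y z ∨ muA μ y z ≤ muA μ x y) ∨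
          ∃ a : L, x ≤ a ∧ a < z ∧ muA μ x z = muMax μ a z) →
        (muA μ y z = muA μ x z ∨ (muA μ x y ≤ muA μ x z ∧ muA μ x z < muA μ y z)))) := by
  have hmono : muA μ x z ≤ muA μ y z := by
    refine le_iInf₂ fun a ha => ?_
    exact iInf₂_le a ⟨hxy.le.trans ha.1, ha.2⟩
  refine ⟨hmono, fun hc => ?_⟩
  -- key lemma: if x ≤ a < z and ¬ y ≤ a then muA μ x y ≤ muMax μ a z
  have keyA : ∀ a : L, x ≤ a → a < z → ¬ y ≤ a → muA μ x y ≤ muMax μ a z := by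
    intro a hxa haz hya
    have h1 : muA μ x y ≤ muMax μ (a ⊓ y) y := by
      refine iInf₂_le (a ⊓ y) ⟨le_inf hxa hxy.le, ?_⟩
      exact lt_of_le_of_ne inf_le_right fun h => hya (inf_eq_right.mp h)
    refine h1.trans ?_
    refine iSup₂_le fun b hb => ?_
    obtain ⟨hb1, hb2⟩ := hb
    have hba : ¬ b ≤ a := fun h => hb1.not_ge (le_inf h hb2)
    have heq : a ⊓ y = b ⊓ a :=
      le_antisymm (le_inf hb1.le inf_le_left)
        (le_inf inf_le_right (inf_le_left.trans hb2))
    calc μ (a ⊓ y) b = μ (b ⊓ a) b := by rw [heq]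
      _ ≤ μ a (b ⊔ a) := hc b a hba
      _ ≤ muMax μ a z := by
          refine le_iSup₂_of_le (b ⊔ a) ⟨?_, sup_le (hb2.trans hyz.le) haz.le⟩ le_rfl
          exact (left_lt_sup.2 hba).trans_le (sup_comm a b).le
  have key : ∀ a : L, x ≤ a → a < z → muA μ x y ⊓ muA μ y z ≤ muMax μ a z := by
    intro a hxa haz
    by_cases hya : y ≤ a
    · exact inf_le_right.trans (iInf₂_le a ⟨hya, haz⟩)
    · exact inf_le_left.trans (keyA a hxa haz hya)
  have parta : muA μ x y ⊓ muA μ y z ≤ muA μ x z :=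
    le_iInf₂ fun a ha => key a ha.1 ha.2
  have b1 : muA μ y z ≤ muA μ x y → muA μ y z = muA μ x z := fun h =>
    le_antisymm ((le_inf h le_rfl).trans parta) hmono
  refine ⟨parta, b1, fun h => ⟨(le_inf le_rfl h.le).trans parta, hmono⟩, ?_⟩
  rintro ((h | h) | ⟨a, hxa, haz, heqa⟩)
  · have hx : muA μ x y ≤ muA μ x z := (le_inf le_rfl h).trans parta
    rcases eq_or_lt_of_le hmono with he | hlt
    · exact Or.inl he.symm
    · exact Or.inr ⟨hx, hlt⟩
  · exact Or.inl (b1 h)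
  · by_cases hya : y ≤ a
    · exact Or.inl (le_antisymm (heqa ▸ iInf₂_le a ⟨hya, haz⟩) hmono)
    · have hx : muA μ x y ≤ muA μ x z := heqa ▸ keyA a hxa haz hya
      rcases eq_or_lt_of_le hmono with he | hlt
      · exact Or.inl he.symm
      · exact Or.inr ⟨hx, hlt⟩
end

section
/- Assume the pay-off function μ is convex. Let u, x, y ∈ 𝓛 with u < x and u < y. Then: (a) μ_A(u, x ⊔ y) ≥ inf{μ_A(u,x), μ_A(u,y)}; (b) if μ_A(u,x) and μ_A(u,y) are comparable in S, or if there exists a ∈ 𝓛 with u ≤ a < x ⊔ y and μ_A(u, x ⊔ y) = μ_max(a, x ⊔ y), then μ_A(u, x ⊔ y) ≥ μ_A(u,x) or μ_A(u, x ⊔ y) ≥ μ_A(u,y). -/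
variable {L : Type*} {S : Type*}

lemma key_step [Lattice L] [CompleteLattice S] {μ : L → L → S} (hconv : ConvexPayoff μ)
    {u x a z : L} (hux : u ≤ x) (hua : u ≤ a) (hxa : ¬ x ≤ a)
    (hxz : x ≤ z) (haz : a ≤ z) :
    muA μ u x ≤ muMax μ a z := by
  have h1 : muA μ u x ≤ muMax μ (a ⊓ x) x := by
    refine biInf_le _ ?_
    exact ⟨le_inf hua hux,
      lt_of_le_of_ne inf_le_right (fun h => hxa (h ▸ inf_le_left))⟩
  refine h1.trans ?_
  refine iSup₂_le fun b hb => ?_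
  obtain ⟨hab, hbx⟩ := hb
  have hba : ¬ b ≤ a := fun h => absurd (le_inf h hbx) (not_le_of_gt hab)
  have heq : b ⊓ a = a ⊓ x :=
    le_antisymm (le_inf inf_le_right (inf_le_left.trans hbx))
      (le_inf hab.le inf_le_left)
  have hc := hconv b a hba
  rw [heq] at hc
  refine hc.trans ?_
  refine le_iSup₂_of_le (b ⊔ a) ⟨?_, sup_le (hbx.trans hxz) haz⟩ le_rfl
  exact lt_of_le_of_ne le_sup_right (fun h => hba (h ▸ le_sup_left))

theorem stmt2 [Lattice L] [BoundedOrder L] [CompleteLattice S]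
    (hbt : (⊥ : L) ≠ ⊤) (μ : L → L → S) (hconv : ConvexPayoff μ)
    (u x y : L) (hux : u < x) (huy : u < y) :
    -- (a)
    muA μ u x ⊓ muA μ u y ≤ muA μ u (x ⊔ y) ∧
    -- (b)
    (((muA μ u x ≤ muA μ u y ∨ muA μ u y ≤ muA μ u x) ∨
        ∃ a : L, u ≤ a ∧ a < x ⊔ y ∧ muA μ u (x ⊔ y) = muMax μ a (x ⊔ y)) →
      (muA μ u x ≤ muA μ u (x ⊔ y) ∨ muA μ u y ≤ muA μ u (x ⊔ y))) := by
  have key : ∀ a : L, u ≤ a → a < x ⊔ y →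
      muA μ u x ≤ muMax μ a (x ⊔ y) ∨ muA μ u y ≤ muMax μ a (x ⊔ y) := by
    intro a hua haxy
    by_cases hxa : x ≤ a
    · have hya : ¬ y ≤ a := fun h => absurd (sup_le hxa h) (not_le_of_gt haxy)
      right
      exact key_step hconv huy.le hua hya (le_sup_right (a := x)) haxy.le
    · left
      exact key_step hconv hux.le hua hxa le_sup_left haxy.le
  constructor
  · refine le_iInf₂ fun a ha => ?_
    rcases key a ha.1 ha.2 with h | h
    · exact inf_le_left.trans h
    · exact inf_le_right.trans h
  · rintro (h | ⟨a, hua, haxy, heq⟩)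
    · have ha : muA μ u x ⊓ muA μ u y ≤ muA μ u (x ⊔ y) := by
        refine le_iInf₂ fun a ha => ?_
        rcases key a ha.1 ha.2 with h | h
        · exact inf_le_left.trans h
        · exact inf_le_right.trans h
      rcases h with h | h
      · left; rwa [inf_eq_left.mpr h] at ha
      · right; rwa [inf_eq_right.mpr h] at ha
    · rcases key a hua haxy with h | h
      · left; rw [heq]; exact h
      · right; rw [heq]; exact h
end

section
/- Assume the pay-off function μ is convex. Let (x,z) ∈ 𝓛 × 𝓛 with x < z. If μ_A(x,z) equals the greatest element of S, then for every a ∈ 𝓛 with a < x one has μ_A(a,x) ≤ μ_A(a,z). -/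
variable {L : Type*} {S : Type*}

theorem stmt3 [Lattice L] [BoundedOrder L] [CompleteLattice S]
    (hbt : (⊥ : L) ≠ ⊤) (μ : L → L → S) (hconv : ConvexPayoff μ)
    (x z : L) (hxz : x < z) (htop : muA μ x z = (⊤ : S)) :
    ∀ a : L, a < x → muA μ a x ≤ muA μ a z := by
  intro a hax
  rw [muA]
  refine le_iInf₂ fun c hc => ?_
  obtain ⟨hac, hcz⟩ := hc
  by_cases hxc : x ≤ c
  · -- then μ_max(c,z) ≥ μ_A(x,z) = ⊤
    have h1 : muA μ x z ≤ muMax μ c z := iInf₂_le c ⟨hxc, hcz⟩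
    rw [htop] at h1
    rw [top_le_iff] at h1
    rw [h1]
    exact le_top
  by_cases hcx : c ≤ x
  · -- c < x : direct, using monotonicity of muMax in y
    have hclx : c < x := lt_of_le_of_ne hcx (fun h => hxc (h ▸ le_refl x))
    calc muA μ a x ≤ muMax μ c x := iInf₂_le c ⟨hac, hclx⟩
      _ ≤ muMax μ c z := by
          refine iSup₂_le fun b hb => ?_
          exact le_iSup₂_of_le b ⟨hb.1, hb.2.trans hxz.le⟩ le_rfl
  · -- incomparable case: use convexity
    set c' := c ⊓ x with hc'
    have hc'x : c' < x := lt_of_le_of_ne inf_le_right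
      (fun h => hxc (by rw [← h]; exact inf_le_left))
    have hac' : a ≤ c' := le_inf hac hax.le
    calc muA μ a x ≤ muMax μ c' x := iInf₂_le c' ⟨hac', hc'x⟩
      _ ≤ muMax μ c z := by
          refine iSup₂_le fun b hb => ?_
          obtain ⟨hc'b, hbx⟩ := hb
          have hbc : ¬ b ≤ c := fun h => absurd (le_inf h hbx) (not_le_of_gt hc'b)
          have hkey : μ (b ⊓ c) b ≤ μ c (b ⊔ c) := hconv b c hbc
          have hbc' : b ⊓ c = c' := le_antisymm
            (le_inf inf_le_right (inf_le_left.trans hbx))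
            (le_inf hc'b.le inf_le_left)
          rw [hbc'] at hkey
          refine hkey.trans ?_
          exact le_iSup₂_of_le (b ⊔ c)
            ⟨lt_of_le_of_ne le_sup_right (fun h => hbc (h ▸ le_sup_left)),
             sup_le (hbx.trans hxz.le) hcz.le⟩ le_rfl
end

section
/- Assume the pay-off function μ is convex and that 𝓛 satisfies the ascending chain condition and the μ_A-descending chain condition. Then there exists x ∈ 𝓛 \ {⊥} such that: (S1) for all y ∈ 𝓛 \ {⊥} one does not have μ_A(x) < μ_A(y); and (S2) for all y ∈ 𝓛 \ {⊥}, μ_A(y) = μ_A(x) implies y ≤ x. Moreover, if S is totally ordered, then such an element x is unique. -/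
variable {L : Type*} {S : Type*}

lemma lemA [Lattice L] [OrderBot L] [CompleteLattice S] {μ : L → L → S}
    (hconv : ConvexPayoff μ) {a z w : L} (hza : ¬ z ≤ a) (hw : a ⊔ z ≤ w) :
    muA μ ⊥ z ≤ muMax μ a w := by
  have h1 : muA μ ⊥ z ≤ muMax μ (z ⊓ a) z :=
    iInf₂_le (z ⊓ a) ⟨bot_le, inf_lt_left.mpr hza⟩
  refine h1.trans (iSup₂_le fun b hb => ?_)
  obtain ⟨hb1, hb2⟩ := hb
  have hba : ¬ b ≤ a := fun h => absurd (le_inf hb2 h) (not_le_of_gt hb1)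
  have key := hconv b a hba
  have heq : b ⊓ a = z ⊓ a :=
    le_antisymm (inf_le_inf_right a hb2) (le_inf hb1.le inf_le_right)
  rw [heq] at key
  refine key.trans ?_
  refine le_iSup₂_of_le (b ⊔ a) ⟨right_lt_sup.mpr hba, ?_⟩ le_rfl
  exact sup_le (hb2.trans ((le_sup_right : z ≤ a ⊔ z).trans hw))
    ((le_sup_left : a ≤ a ⊔ z).trans hw)

lemma lemB [Lattice L] [OrderBot L] [CompleteLattice S] {μ : L → L → S}
    (hconv : ConvexPayoff μ) {s : S} {y z : L}
    (hy : s ≤ muA μ ⊥ y) (hz : s ≤ muA μ ⊥ z) :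
    s ≤ muA μ ⊥ (y ⊔ z) := by
  refine le_iInf₂ fun a ha => ?_
  obtain ⟨-, ha2⟩ := ha
  by_cases hza : z ≤ a
  · have hya : ¬ y ≤ a := fun h => absurd (sup_le h hza) (not_le_of_gt ha2)
    exact hy.trans (lemA hconv hya (sup_le ha2.le le_sup_left))
  · exact hz.trans (lemA hconv hza (sup_le ha2.le le_sup_right))

lemma exists_maximal_of_acc {L : Type*} [Preorder L]
    (hacc : ¬ ∃ f : ℕ → L, StrictMono f)
    (s : Set L) (hs : s.Nonempty) : ∃ m ∈ s, ∀ z ∈ s, ¬ m < z := by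
  by_contra h
  push_neg at h
  obtain ⟨x0, hx0⟩ := hs
  have hstep : ∀ x : s, ∃ z : s, (x : L) < z := by
    intro x
    obtain ⟨z, hz, hlt⟩ := h x x.2
    exact ⟨⟨z, hz⟩, hlt⟩
  choose g hg using hstep
  refine hacc ⟨fun n => ((g^[n] ⟨x0, hx0⟩ : s) : L),
    strictMono_nat_of_lt_succ fun n => ?_⟩
  rw [Function.iterate_succ_apply']
  exact hg _

theorem stmt4 [Lattice L] [BoundedOrder L] [CompleteLattice S]
    (hbt : (⊥ : L) ≠ ⊤) (μ : L → L → S) (hconv : ConvexPayoff μ)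
    -- ascending chain condition
    (hacc : ¬ ∃ f : ℕ → L, StrictMono f)
    -- μ_A-descending chain condition
    (hdcc : ∀ a : L, ¬ ∃ f : ℕ → L, (∀ n, a < f n) ∧ StrictAnti f ∧
      StrictMono (fun n => muA μ a (f n))) :
    (∃ x : L, x ≠ ⊥ ∧
      (∀ y : L, y ≠ ⊥ → ¬ muA μ ⊥ x < muA μ ⊥ y) ∧
      (∀ y : L, y ≠ ⊥ → muA μ ⊥ y = muA μ ⊥ x → y ≤ x)) ∧
    ((∀ s t : S, s ≤ t ∨ t ≤ s) →
      ∃! x : L, x ≠ ⊥ ∧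
        (∀ y : L, y ≠ ⊥ → ¬ muA μ ⊥ x < muA μ ⊥ y) ∧
        (∀ y : L, y ≠ ⊥ → muA μ ⊥ y = muA μ ⊥ x → y ≤ x)) := by
  classical
  set ν : L → S := muA μ ⊥ with hνdef
  -- P u : u is the greatest element among those with value ≥ ν u
  set P : L → Prop := fun u => u ≠ ⊥ ∧ ∀ z : L, z ≠ ⊥ → ν u ≤ ν z → z ≤ u with hPdef
  -- from any y ≠ ⊥ produce an element m with P m and ν y ≤ ν m
  have mk : ∀ y : L, y ≠ ⊥ → ∃ m, P m ∧ ν y ≤ ν m := by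
    intro y hy
    obtain ⟨m, hm_mem, hm_max⟩ := exists_maximal_of_acc hacc
      {z : L | z ≠ ⊥ ∧ ν y ≤ ν z} ⟨y, hy, le_rfl⟩
    obtain ⟨hm0, hym⟩ := hm_mem
    refine ⟨m, ⟨hm0, fun z hz hmz => ?_⟩, hym⟩
    have hyz : ν y ≤ ν z := hym.trans hmz
    have hsb : m ⊔ z ≠ ⊥ := fun h => hm0 (le_bot_iff.mp (h ▸ (le_sup_left : m ≤ m ⊔ z)))
    have hmem : m ⊔ z ∈ {z : L | z ≠ ⊥ ∧ ν y ≤ ν z} := ⟨hsb, lemB hconv hym hyz⟩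
    have hnlt := hm_max _ hmem
    have heq : m = m ⊔ z := by
      by_contra hne
      exact hnlt ((le_sup_left : m ≤ m ⊔ z).lt_of_ne hne)
    exact (le_sup_right : z ≤ m ⊔ z).trans heq.ge
  -- Step 1: there is x0 satisfying (S1)
  have hM : ∃ x0 : L, x0 ≠ ⊥ ∧ ∀ y : L, y ≠ ⊥ → ¬ ν x0 < ν y := by
    by_contra hM
    push_neg at hM
    -- improvement step
    have step : ∀ u : { x : L // P x }, ∃ v : { x : L // P x },
        (v : L) < u ∧ ν u < ν v := by
      rintro ⟨u, hu0, hu1⟩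
      obtain ⟨y, hy0, hylt⟩ := hM u hu0
      obtain ⟨m, hPm, hym⟩ := mk y hy0
      have hum : ν u < ν m := hylt.trans_le hym
      have hmu : m ≤ u := hu1 m hPm.1 hum.le
      exact ⟨⟨m, hPm⟩, hmu.lt_of_ne (fun h => hum.ne' (congrArg ν h)), hum⟩
    choose g hg1 hg2 using step
    obtain ⟨m0, hPm0, -⟩ := mk ⊤ (Ne.symm hbt)
    set f : ℕ → { x : L // P x } := fun n => g^[n] ⟨m0, hPm0⟩ with hfdef
    have hfs : ∀ n, f (n + 1) = g (f n) := fun n => Function.iterate_succ_apply' g n _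
    refine hdcc ⊥ ⟨fun n => (f n : L), fun n => bot_lt_iff_ne_bot.mpr (f n).2.1,
      strictAnti_nat_of_succ_lt fun n => ?_, strictMono_nat_of_lt_succ fun n => ?_⟩
    · rw [hfs n]; exact hg1 _
    · show muA μ ⊥ (f n : L) < muA μ ⊥ (f (n + 1) : L)
      rw [hfs n]; exact hg2 _
  obtain ⟨x0, hx00, hx01⟩ := hM
  -- Step 2: greatest element among those with value equal to ν x0
  have hmain : ∃ x : L, x ≠ ⊥ ∧
      (∀ y : L, y ≠ ⊥ → ¬ muA μ ⊥ x < muA μ ⊥ y) ∧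
      (∀ y : L, y ≠ ⊥ → muA μ ⊥ y = muA μ ⊥ x → y ≤ x) := by
    obtain ⟨m, hm_mem, hm_max⟩ := exists_maximal_of_acc hacc
      {z : L | z ≠ ⊥ ∧ ν z = ν x0} ⟨x0, hx00, rfl⟩
    obtain ⟨hm0, hmv⟩ := hm_mem
    have hgreatest : ∀ y : L, y ≠ ⊥ → ν y = ν x0 → y ≤ m := by
      intro y hy0 hyv
      have hsb : m ⊔ y ≠ ⊥ := fun h => hm0 (le_bot_iff.mp (h ▸ (le_sup_left : m ≤ m ⊔ y)))
      have hle : ν x0 ≤ ν (m ⊔ y) := lemB hconv hmv.ge hyv.ge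
      have hveq : ν (m ⊔ y) = ν x0 := by
        by_contra hne
        exact hx01 (m ⊔ y) hsb (hle.lt_of_ne (Ne.symm hne))
      have hnlt := hm_max (m ⊔ y) ⟨hsb, hveq⟩
      have heq : m = m ⊔ y := by
        by_contra hne
        exact hnlt ((le_sup_left : m ≤ m ⊔ y).lt_of_ne hne)
      exact (le_sup_right : y ≤ m ⊔ y).trans heq.ge
    refine ⟨m, hm0, fun y hy => ?_, fun y hy hyv => hgreatest y hy (hyv.trans hmv)⟩
    show ¬ ν m < ν y
    rw [hmv]
    exact hx01 y hy
  refine ⟨hmain, fun htot => ?_⟩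
  obtain ⟨x, hx0, hx1, hx2⟩ := hmain
  refine ⟨x, ⟨hx0, hx1, hx2⟩, ?_⟩
  rintro y ⟨hy0, hy1, hy2⟩
  have hveq : muA μ ⊥ y = muA μ ⊥ x := by
    rcases htot (muA μ ⊥ x) (muA μ ⊥ y) with h | h
    · by_contra hne
      exact hx1 y hy0 (h.lt_of_ne (Ne.symm hne))
    · by_contra hne
      exact hy1 x hx0 (h.lt_of_ne hne)
  exact le_antisymm (hx2 y hy0 hveq) (hy2 x hx0 hveq.symm)
end

section
/- Assume the pay-off function μ is convex and let x ∈ St(μ) with x ≠ ⊤. Then: (1) for every z ∈ 𝓛 with ⊥ < z ≤ x, one does not have μ_A(⊥,x) < μ_A(⊥,z) (i.e. the restriction of the Harder-Narasimhan game to the interval [⊥,x] is semi-stable); (2) for every y ∈ 𝓛 with x < y, one does not have μ_A(⊥,x) ≤ μ_A(x,y). -/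
/-!
If `μ_A(⊥,x) ≤ μ_A(x,y)` for some `x < y`, convexity lets every defender position `a` in
`[⊥, y)` that is not above `x` be traded for `x ⊓ a ∈ [⊥, x)`: each attack `b` from `x ⊓ a`
inside `x` is matched by the attack `b ⊔ a` from `a` inside `y`. Hence `μ_A(⊥,x) ≤ μ_A(⊥,y)`,
which for `x ∈ St(μ)` forces `y ≤ x` by (S1) and (S2).
-/

variable {L : Type*} {S : Type*}

/-- `St(μ)`: the set of `x ∈ 𝓛 \ {⊥}` satisfying conditions (S1) and (S2). -/
def St [Preorder L] [OrderBot L] [CompleteLattice S] (μ : L → L → S) : Set L :=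
  {x : L | x ≠ ⊥ ∧ (∀ y : L, y ≠ ⊥ → ¬ muA μ ⊥ x < muA μ ⊥ y) ∧
    (∀ y : L, y ≠ ⊥ → muA μ ⊥ y = muA μ ⊥ x → y ≤ x)}

section Lemmas

variable [CompleteLattice S] {μ : L → L → S}

theorem muMax_le_iff [Preorder L] {a y : L} {c : S} :
    muMax μ a y ≤ c ↔ ∀ b, a < b → b ≤ y → μ a b ≤ c := by
  simp only [muMax, Set.mem_ofPred_eq, iSup₂_le_iff, and_imp]

theorem le_muMax [Preorder L] {a b y : L} (hab : a < b) (hby : b ≤ y) :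
    μ a b ≤ muMax μ a y :=
  le_iSup₂ (f := fun b (_ : b ∈ {b : L | a < b ∧ b ≤ y}) => μ a b) b ⟨hab, hby⟩

theorem le_muA_iff [Preorder L] {x y : L} {c : S} :
    c ≤ muA μ x y ↔ ∀ a, x ≤ a → a < y → c ≤ muMax μ a y := by
  simp only [muA, Set.mem_ofPred_eq, le_iInf₂_iff, and_imp]

theorem muA_le_muMax [Preorder L] {x a y : L} (hxa : x ≤ a) (hay : a < y) :
    muA μ x y ≤ muMax μ a y :=
  le_muA_iff.mp le_rfl a hxa hay

theorem ConvexPayoff.muMax_inf_le [Lattice L] (hconv : ConvexPayoff μ) {x a y : L}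
    (hxy : x ≤ y) (hay : a ≤ y) : muMax μ (x ⊓ a) x ≤ muMax μ a y := by
  refine muMax_le_iff.mpr fun b hb hbx => ?_
  have hba : ¬ b ≤ a := fun h => hb.not_ge (le_inf hbx h)
  have hinf : b ⊓ a = x ⊓ a := le_antisymm (inf_le_inf_right a hbx) (le_inf hb.le inf_le_right)
  calc μ (x ⊓ a) b = μ (b ⊓ a) b := by rw [hinf]
    _ ≤ μ a (b ⊔ a) := hconv b a hba
    _ ≤ muMax μ a y := le_muMax (right_lt_sup.mpr hba) (sup_le (hbx.trans hxy) hay)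

theorem ConvexPayoff.muA_le_muA_of_le_muA [Lattice L] (hconv : ConvexPayoff μ) {w x y : L}
    (hwx : w ≤ x) (hxy : x ≤ y) (h : muA μ w x ≤ muA μ x y) : muA μ w x ≤ muA μ w y := by
  refine le_muA_iff.mpr fun a hwa hay => ?_
  by_cases hxa : x ≤ a
  · exact h.trans (muA_le_muMax hxa hay)
  · calc muA μ w x ≤ muMax μ (x ⊓ a) x := muA_le_muMax (le_inf hwx hwa) (inf_lt_left.mpr hxa)
      _ ≤ muMax μ a y := hconv.muMax_inf_le hxy hay.le

theorem le_of_mem_St_of_muA_le [Preorder L] [OrderBot L] {x y : L} (hx : x ∈ St μ)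
    (hy : y ≠ ⊥) (h : muA μ ⊥ x ≤ muA μ ⊥ y) : y ≤ x :=
  hx.2.2 y hy (h.eq_of_not_lt (hx.2.1 y hy)).symm

end Lemmas

theorem stmt5_general [Lattice L] [BoundedOrder L] [CompleteLattice S]
    (μ : L → L → S) (hconv : ConvexPayoff μ)
    (x : L) (hx : x ∈ St μ) :
    -- (1): the restriction of the game to [⊥, x] is semi-stable
    (∀ z : L, ⊥ < z → z ≤ x → ¬ muA μ ⊥ x < muA μ ⊥ z) ∧
    -- (2)
    (∀ y : L, x < y → ¬ muA μ ⊥ x ≤ muA μ x y) := by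
  refine ⟨fun z hz _ => hx.2.1 z hz.ne', fun y hxy hle => ?_⟩
  have hy : y ≠ ⊥ := (bot_le.trans_lt hxy).ne'
  exact hxy.not_ge <| le_of_mem_St_of_muA_le hx hy <|
    hconv.muA_le_muA_of_le_muA bot_le hxy.le hle

theorem stmt5 [Lattice L] [BoundedOrder L] [CompleteLattice S]
    (hbt : (⊥ : L) ≠ ⊤) (μ : L → L → S) (hconv : ConvexPayoff μ)
    (x : L) (hx : x ∈ St μ) (hxtop : x ≠ ⊤) :
    -- (1): the restriction of the game to [⊥, x] is semi-stable
    (∀ z : L, ⊥ < z → z ≤ x → ¬ muA μ ⊥ x < muA μ ⊥ z) ∧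
    -- (2)
    (∀ y : L, x < y → ¬ muA μ ⊥ x ≤ muA μ x y) :=
  stmt5_general μ hconv x hx
end

section
/- There exists a unique natural number n ≥ 1, a unique chain of submodules 0 = M₀ ⊊ M₁ ⊊ ⋯ ⊊ Mₙ = M, and a unique sequence of prime ideals of R satisfying p₁ ≻ p₂ ≻ ⋯ ≻ pₙ (strictly decreasing for the fixed linear order ≼) such that for every i ∈ {1,…,n} the quotient module M_i/M_{i-1} is p_i-coprimary. -/
/-!
Let `p` be the `≼`-largest associated prime of `M` and `Γ_p(M)` its `p`-power torsion submodule
(`Ideal.primaryComponent`). Every associated prime of `Γ_p(M)` contains `p`, so it is `p` by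
maximality, while the associated primes of `M ⧸ Γ_p(M)` are those of `M` not containing `p`, all
strictly below `p`. Repeating with `M ⧸ Γ_p(M)`, which has fewer associated primes, builds the
filtration. Conversely, in any such filtration `Ass M ⊆ {p₁, …, pₙ}`, so `p₁` is the largest
associated prime, and `M ⧸ M₁` has no associated prime containing `p₁`, which forces
`M₁ = Γ_{p₁}(M)`; uniqueness follows by induction, passing to `M ⧸ M₁`.
-/

/-- A coprimary filtration of `M` relative to a linear order `le` on prime ideals:
a chain of submodules `0 = N 0 ⊊ N 1 ⊊ ⋯ ⊊ N n = M` together with prime ideals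
`p 1 ≻ p 2 ≻ ⋯ ≻ p n` (strictly decreasing for `le`) such that each subquotient
`N (i+1) / N i` is `p (i+1)`-coprimary (i.e. its set of associated primes is
`{p (i+1)}`). -/
def IsCoprimaryFiltration {R M : Type*} [CommRing R] [AddCommGroup M] [Module R M]
    (le : Ideal R → Ideal R → Prop)
    (n : ℕ) (N : ℕ → Submodule R M) (p : ℕ → Ideal R) : Prop :=
  1 ≤ n ∧ N 0 = ⊥ ∧ N n = ⊤ ∧
  (∀ i < n, N i < N (i + 1)) ∧
  (∀ i, 1 ≤ i → i ≤ n → (p i).IsPrime) ∧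
  (∀ i : ℕ, i + 1 < n → le (p (i + 2)) (p (i + 1)) ∧ p (i + 2) ≠ p (i + 1)) ∧
  (∀ i < n, associatedPrimes R
      (↥(N (i + 1)) ⧸ ((N i).comap (N (i + 1)).subtype)) = {p (i + 1)})

open Submodule
open Ideal (primaryComponent primaryComponent_mem primaryComponent_map_mem)

section Subquotient

variable {R M M' : Type*} [CommRing R] [AddCommGroup M] [Module R M] [AddCommGroup M'] [Module R M']

lemma associatedPrimes_subquotient_bot (B : Submodule R M) :
    associatedPrimes R (↥B ⧸ (⊥ : Submodule R M).comap B.subtype) = associatedPrimes R B := by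
  rw [comap_bot, ker_subtype]
  exact LinearEquiv.AssociatedPrimes.eq (quotEquivOfEqBot ⊥ rfl)

lemma associatedPrimes_subquotient_comap {f : M →ₗ[R] M'} (hf : Function.Surjective f)
    (A B : Submodule R M') :
    associatedPrimes R (↥(B.comap f) ⧸ (A.comap f).comap (B.comap f).subtype) =
      associatedPrimes R (↥B ⧸ A.comap B.subtype) := by
  let g := (A.comap B.subtype).mkQ ∘ₗ f.restrict (p := B.comap f) (q := B) fun _ hx => hx
  have hg : Function.Surjective g := by
    rintro ⟨y, hy⟩
    obtain ⟨x, rfl⟩ := hf y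
    exact ⟨⟨x, hy⟩, rfl⟩
  have hker : (A.comap f).comap (B.comap f).subtype = LinearMap.ker g := by
    ext x
    simp [g]
  exact LinearEquiv.AssociatedPrimes.eq
    ((quotEquivOfEq _ _ hker).trans (g.quotKerEquivOfSurjective hg))

end Subquotient

section PrimaryComponent

variable {R M : Type*} [CommRing R] [AddCommGroup M] [Module R M] {p q : Ideal R}

lemma associatedPrimes_eq_empty_iff [IsNoetherianRing R] :
    associatedPrimes R M = ∅ ↔ Subsingleton M := by
  refine ⟨fun h => ?_, fun _ => associatedPrimes.eq_empty_of_subsingleton⟩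
  by_contra hM
  rw [not_subsingleton_iff_nontrivial] at hM
  exact (associatedPrimes.nonempty R M).ne_empty h

lemma nontrivial_of_mem_associatedPrimes (hq : q ∈ associatedPrimes R M) : Nontrivial M := by
  by_contra hM
  rw [not_nontrivial_iff_subsingleton] at hM
  exact not_isAssociatedPrime_of_subsingleton hq

lemma mem_associatedPrimes_of_eq_colon_of_mem [IsNoetherianRing R] {K : Submodule R M} {x : M}
    (hx : x ∈ K) (hq : q.IsPrime) (hqx : q = (⊥ : Submodule R M).colon {x}) :
    q ∈ associatedPrimes R K := by
  refine isAssociatedPrime_iff.mpr ⟨hq, ⟨x, hx⟩, ?_⟩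
  ext r
  simp [hqx, mem_colon_singleton, Subtype.ext_iff]

lemma exists_primaryComponent_eq_torsionBySet_pow [IsNoetherian R M] (p : Ideal R) :
    ∃ k : ℕ, primaryComponent M p = torsionBySet R M ↑(p ^ k) := by
  obtain ⟨k, hk⟩ := monotone_stabilizes_iff_noetherian.mpr ‹IsNoetherian R M›
    ⟨fun k => torsionBySet R M ↑(p ^ k), fun i j hij => torsionBySet_le_torsionBySet_pow i j hij p⟩
  refine ⟨k, le_antisymm (iSup_le fun j => ?_) (le_iSup (fun j => torsionBySet R M ↑(p ^ j)) k)⟩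
  rcases le_total j k with hjk | hkj
  · exact torsionBySet_le_torsionBySet_pow j k hjk p
  · exact (hk j hkj).ge

lemma le_of_mem_associatedPrimes_primaryComponent
    (hq : q ∈ associatedPrimes R (primaryComponent M p)) : p ≤ q := by
  obtain ⟨hq, y, rfl⟩ := hq
  obtain ⟨k, hk⟩ := (primaryComponent_mem _ p y.1).mp y.2
  refine Ideal.IsPrime.le_of_pow_le (n := k) (le_trans (fun a ha => ?_) (Ideal.le_radical))
  rw [mem_colon_singleton, Submodule.mem_bot, Subtype.ext_iff]
  exact (mem_torsionBySet_iff _ _).mp hk ⟨a, ha⟩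

lemma mem_associatedPrimes_primaryComponent [IsNoetherianRing R]
    (hp : p ∈ associatedPrimes R M) : p ∈ associatedPrimes R (primaryComponent M p) := by
  obtain ⟨hp, x, hpx⟩ := isAssociatedPrime_iff.mp hp
  refine mem_associatedPrimes_of_eq_colon_of_mem ((primaryComponent_mem _ p x).mpr ⟨1, ?_⟩) hp hpx
  rw [mem_torsionBySet_iff]
  rintro ⟨a, ha⟩
  rw [SetLike.mem_coe, pow_one, hpx, mem_colon_singleton] at ha
  exact ha

lemma associatedPrimes_quotient_primaryComponent_subset
    [IsNoetherianRing R] [IsNoetherian R M] :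
    associatedPrimes R (M ⧸ primaryComponent M p) ⊆ {q ∈ associatedPrimes R M | ¬ p ≤ q} := by
  intro q hq
  obtain ⟨hq, x', hqx⟩ := isAssociatedPrime_iff.mp hq
  obtain ⟨x, rfl⟩ := Submodule.Quotient.mk_surjective _ x'
  obtain ⟨k, hk⟩ := exists_primaryComponent_eq_torsionBySet_pow (M := M) p
  have hmem : ∀ b, b ∈ q ↔ b • x ∈ primaryComponent M p := fun b => by
    rw [hqx, mem_colon_singleton, mem_bot, ← Quotient.mk_smul, Quotient.mk_eq_zero]
  have hkill : ∀ y ∈ primaryComponent M p, ∀ s ∈ p ^ k, s • y = 0 := fun y hy s hs => by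
    rw [hk, mem_torsionBySet_iff] at hy
    exact hy ⟨s, hs⟩
  have hnle : ¬ p ≤ q := by
    intro hpq
    -- `p • x ⊆ Γ_p(M)` is killed by `p ^ k`, so `x ∈ Γ_p(M)` and the class of `x` vanishes
    have hx : x ∈ primaryComponent M p := by
      refine (primaryComponent_mem _ p x).mpr ⟨k + 1, (mem_torsionBySet_iff _ _).mpr ?_⟩
      rintro ⟨a, ha⟩
      have hle : p ^ k * p ≤ (⊥ : Submodule R M).colon {x} := Ideal.mul_le.mpr fun s hs c hc => by
        rw [mem_colon_singleton, mem_bot, mul_smul]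
        exact hkill _ ((hmem c).mp (hpq hc)) s hs
      simpa [mem_colon_singleton] using hle (pow_succ p k ▸ ha)
    exact hq.ne_top ((Ideal.eq_top_iff_one _).mpr ((hmem 1).mpr (by rwa [one_smul])))
  obtain ⟨s, hs, hsq⟩ := SetLike.not_le_iff_exists.mp fun h => hnle (Ideal.IsPrime.le_of_pow_le h)
  refine ⟨isAssociatedPrime_iff.mpr ⟨hq, s • x, ?_⟩, hnle⟩
  ext b
  rw [mem_colon_singleton, mem_bot, ← mul_smul]
  refine ⟨fun hb => ?_, fun hbs =>
    (hq.mem_or_mem ((hmem _).mpr (by rw [hbs]; exact zero_mem _))).resolve_right hsq⟩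
  rw [mul_comm, mul_smul]
  exact hkill _ ((hmem b).mp hb) s hs

lemma primaryComponent_eq_top [IsNoetherianRing R] [IsNoetherian R M]
    (h : ∀ q ∈ associatedPrimes R M, p ≤ q) : primaryComponent M p = ⊤ :=
  Submodule.Quotient.subsingleton_iff.mp <| associatedPrimes_eq_empty_iff.mp <|
    Set.eq_empty_of_forall_notMem fun _ hq =>
      let hq := associatedPrimes_quotient_primaryComponent_subset hq
      hq.2 (h _ hq.1)

lemma primaryComponent_eq_bot [IsNoetherianRing R]
    (h : ∀ q ∈ associatedPrimes R M, ¬ p ≤ q) : primaryComponent M p = ⊥ :=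
  have := associatedPrimes_eq_empty_iff.mp <| Set.eq_empty_of_forall_notMem fun _ hq =>
    h _ (associatedPrimes.subset_of_injective (injective_subtype _) hq)
      (le_of_mem_associatedPrimes_primaryComponent hq)
  eq_bot_of_subsingleton

end PrimaryComponent

structure IsLinearExtensionOfInclusion {R : Type*} [CommRing R]
    (le : Ideal R → Ideal R → Prop) : Prop where
  refl : ∀ p : Ideal R, p.IsPrime → le p p
  trans : ∀ p q s : Ideal R, p.IsPrime → q.IsPrime → s.IsPrime → le p q → le q s → le p s
  antisymm : ∀ p q : Ideal R, p.IsPrime → q.IsPrime → le p q → le q p → p = q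
  total : ∀ p q : Ideal R, p.IsPrime → q.IsPrime → le p q ∨ le q p
  le_of_le : ∀ p q : Ideal R, p.IsPrime → q.IsPrime → p ≤ q → le p q

namespace IsLinearExtensionOfInclusion

variable {R M : Type*} [CommRing R] [AddCommGroup M] [Module R M]
  {le : Ideal R → Ideal R → Prop}

lemma exists_greatest (hord : IsLinearExtensionOfInclusion le) {s : Set (Ideal R)}
    (hs : s.Finite) (hne : s.Nonempty) (hprime : ∀ q ∈ s, q.IsPrime) :
    ∃ p ∈ s, ∀ q ∈ s, le q p := by
  induction s, hs using Set.Finite.induction_on with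
  | empty => exact absurd hne Set.not_nonempty_empty
  | @insert a s _ _ ih =>
    have ha := hprime a (Set.mem_insert a s)
    rcases s.eq_empty_or_nonempty with rfl | hs
    · exact ⟨a, Set.mem_insert a ∅, by simpa using hord.refl a ha⟩
    obtain ⟨m, hm, hmax⟩ := ih hs fun q hq => hprime q (Set.mem_insert_of_mem a hq)
    have hm' := hprime m (Set.mem_insert_of_mem a hm)
    rcases hord.total a m ha hm' with ham | hma
    · refine ⟨m, Set.mem_insert_of_mem a hm, Set.forall_mem_insert.mpr ⟨ham, hmax⟩⟩
    · refine ⟨a, Set.mem_insert a s, Set.forall_mem_insert.mpr ⟨hord.refl a ha, fun q hq => ?_⟩⟩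
      exact hord.trans q m a (hprime q (Set.mem_insert_of_mem a hq)) hm' ha (hmax q hq) hma

lemma associatedPrimes_primaryComponent_eq_singleton [IsNoetherianRing R]
    (hord : IsLinearExtensionOfInclusion le) {p : Ideal R}
    (hp : p ∈ associatedPrimes R M) (hmax : ∀ q ∈ associatedPrimes R M, le q p) :
    associatedPrimes R (primaryComponent M p) = {p} := by
  refine Set.eq_singleton_iff_unique_mem.mpr ⟨mem_associatedPrimes_primaryComponent hp, ?_⟩
  intro q hq
  have hqM := associatedPrimes.subset_of_injective (injective_subtype _) hq
  exact hord.antisymm q p hq.isPrime hp.isPrime (hmax q hqM)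
    (hord.le_of_le p q hp.isPrime hq.isPrime (le_of_mem_associatedPrimes_primaryComponent hq))

end IsLinearExtensionOfInclusion

namespace IsCoprimaryFiltration

variable {R M : Type*} [CommRing R] [AddCommGroup M] [Module R M]
  {le : Ideal R → Ideal R → Prop} {n : ℕ} {N : ℕ → Submodule R M} {p : ℕ → Ideal R}

lemma mono (h : IsCoprimaryFiltration le n N p) {i j : ℕ} (hij : i ≤ j) (hjn : j ≤ n) :
    N i ≤ N j := by
  induction j, hij using Nat.le_induction with
  | base => exact le_rfl
  | succ j _ ih => exact (ih (by omega)).trans (h.2.2.2.1 j (by omega)).le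

lemma rel_one_of_two_le (hord : IsLinearExtensionOfInclusion le)
    (h : IsCoprimaryFiltration le n N p) {j : ℕ} (hj : 2 ≤ j) (hjn : j ≤ n) :
    le (p j) (p 1) ∧ p j ≠ p 1 := by
  obtain ⟨-, -, -, -, hprime, hstep, -⟩ := h
  induction j, hj using Nat.le_induction with
  | base => exact hstep 0 (by omega)
  | succ j _ ih =>
    obtain ⟨i, rfl⟩ : ∃ i, j = i + 1 := ⟨j - 1, by omega⟩
    have hle₁ := (ih (by omega)).1
    obtain ⟨hle₂, hne₂⟩ := hstep i (by omega)
    have hp₁ := hprime 1 le_rfl (by omega)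
    have hpj := hprime (i + 1) (by omega) (by omega)
    have hpj' := hprime (i + 2) (by omega) (by omega)
    refine ⟨hord.trans _ _ _ hpj' hpj hp₁ hle₂ hle₁, fun he => hne₂ ?_⟩
    exact hord.antisymm _ _ hpj' hpj hle₂ (he ▸ hle₁)

lemma associatedPrimes_subset_of_le (h : IsCoprimaryFiltration le n N p) {j : ℕ} (hjn : j ≤ n) :
    associatedPrimes R (N j) ⊆ p '' Set.Icc 1 j := by
  induction j with
  | zero =>
    rw [h.2.1, associatedPrimes.eq_empty_of_subsingleton]
    exact Set.empty_subset _
  | succ j ih =>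
    have hle := (h.2.2.2.1 j (by omega)).le
    intro q hq
    rcases associatedPrimes.subset_union_of_exact (injective_subtype _)
      (LinearMap.exact_subtype_mkQ ((N j).comap (N (j + 1)).subtype)) hq with hq | hq
    · rw [LinearEquiv.AssociatedPrimes.eq (comapSubtypeEquivOfLe hle)] at hq
      obtain ⟨i, ⟨hi, hij⟩, rfl⟩ := ih (by omega) hq
      exact ⟨i, ⟨hi, by omega⟩, rfl⟩
    · rw [h.2.2.2.2.2.2 j (by omega)] at hq
      exact ⟨j + 1, ⟨by omega, le_rfl⟩, hq.symm⟩

lemma associatedPrimes_subset (h : IsCoprimaryFiltration le n N p) :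
    associatedPrimes R M ⊆ p '' Set.Icc 1 n := by
  have := h.associatedPrimes_subset_of_le le_rfl
  rwa [h.2.2.1, LinearEquiv.AssociatedPrimes.eq topEquiv] at this

lemma comap_map_mkQ (h : IsCoprimaryFiltration le n N p) {i : ℕ} (hi : 1 ≤ i) (hin : i ≤ n) :
    ((N i).map (N 1).mkQ).comap (N 1).mkQ = N i := by
  rw [Submodule.comap_map_mkQ, sup_eq_right.mpr (h.mono hi hin)]

lemma tail (h : IsCoprimaryFiltration le n N p) (hn : 2 ≤ n) :
    IsCoprimaryFiltration le (n - 1) (fun i => (N (i + 1)).map (N 1).mkQ) (fun i => p (i + 1)) := by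
  have hcm {i} (hi : i + 1 ≤ n) := h.comap_map_mkQ (Nat.le_add_left 1 i) hi
  obtain ⟨-, -, htop, hlt, hprime, hstep, hass⟩ := h
  refine ⟨by omega, mkQ_map_self _, ?_, fun i hi => ?_,
    fun i hi hin => hprime _ (by omega) (by omega), fun i hi => hstep _ (by omega), fun i hi => ?_⟩
  · show (N (n - 1 + 1)).map _ = ⊤
    rw [Nat.sub_add_cancel (by omega : 1 ≤ n), htop, Submodule.map_top, range_mkQ]
  · rw [← comap_lt_comap_iff_of_surjective (mkQ_surjective (N 1)), hcm (by omega), hcm (by omega)]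
    exact hlt _ (by omega)
  · have := associatedPrimes_subquotient_comap (mkQ_surjective (N 1))
      ((N (i + 1)).map (N 1).mkQ) ((N (i + 1 + 1)).map (N 1).mkQ)
    rw [hcm (by omega), hcm (by omega)] at this
    rw [← this, hass _ (by omega)]

lemma associatedPrimes_one (h : IsCoprimaryFiltration le n N p) :
    associatedPrimes R (N 1) = {p 1} := by
  have := h.2.2.2.2.2.2 0 h.1
  rwa [h.2.1, associatedPrimes_subquotient_bot] at this

lemma eq_one_iff (h : IsCoprimaryFiltration le n N p) : n = 1 ↔ N 1 = ⊤ := by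
  refine ⟨fun hn => hn ▸ h.2.2.1, fun htop => ?_⟩
  by_contra hn
  exact not_top_lt (htop ▸ h.2.2.2.1 1 (by have := h.1; omega))

lemma greatest (hord : IsLinearExtensionOfInclusion le) (h : IsCoprimaryFiltration le n N p) :
    p 1 ∈ associatedPrimes R M ∧ ∀ q ∈ associatedPrimes R M, le q (p 1) := by
  refine ⟨associatedPrimes.subset_of_injective (injective_subtype (N 1))
    (h.associatedPrimes_one ▸ rfl), fun q hq => ?_⟩
  obtain ⟨i, ⟨hi, hin⟩, rfl⟩ := h.associatedPrimes_subset hq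
  obtain rfl | hi := eq_or_lt_of_le hi
  · exact hord.refl _ (h.2.2.2.2.1 1 le_rfl hin)
  · exact (h.rel_one_of_two_le hord hi hin).1

lemma eq_primaryComponent [IsNoetherianRing R] [IsNoetherian R M]
    (hord : IsLinearExtensionOfInclusion le) (h : IsCoprimaryFiltration le n N p) :
    N 1 = primaryComponent M (p 1) := by
  refine le_antisymm (fun x hx => ?_) (fun x hx => ?_)
  · have htop : primaryComponent (N 1) (p 1) = ⊤ := primaryComponent_eq_top fun q hq => by
      rw [h.associatedPrimes_one, Set.mem_singleton_iff] at hq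
      exact hq.ge
    exact primaryComponent_map_mem _ (N 1).subtype ⟨⟨x, hx⟩, htop ▸ trivial⟩
  by_cases hn : n = 1
  · exact h.eq_one_iff.mp hn ▸ trivial
  have ht := h.tail (by have := h.1; omega)
  have hp₁ := h.2.2.2.2.1 1 le_rfl h.1
  have hbot : primaryComponent (M ⧸ N 1) (p 1) = ⊥ := primaryComponent_eq_bot fun q hq hpq => by
    obtain ⟨i, ⟨hi, hin⟩, rfl⟩ := ht.associatedPrimes_subset hq
    have hpi := h.2.2.2.2.1 (i + 1) (by omega) (by omega)
    obtain ⟨hrel, hne⟩ := h.rel_one_of_two_le hord (by omega : 2 ≤ i + 1) (by omega)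
    exact hne (hord.antisymm _ _ hpi hp₁ hrel (hord.le_of_le _ _ hp₁ hpi hpq))
  have := primaryComponent_map_mem _ (N 1).mkQ ⟨x, hx⟩
  rwa [hbot, mem_bot, mkQ_apply, Quotient.mk_eq_zero] at this

theorem unique [IsNoetherianRing R] [IsNoetherian R M] (hord : IsLinearExtensionOfInclusion le)
    {m : ℕ} {N' : ℕ → Submodule R M} {p' : ℕ → Ideal R}
    (h : IsCoprimaryFiltration le n N p) (h' : IsCoprimaryFiltration le m N' p') :
    n = m ∧ (∀ i ≤ n, N i = N' i) ∧ (∀ i, 1 ≤ i → i ≤ n → p i = p' i) := by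
  induction n using Nat.strong_induction_on generalizing M N p m N' p' with
  | _ n ih =>
  obtain ⟨hmem, hmax⟩ := h.greatest hord
  obtain ⟨hmem', hmax'⟩ := h'.greatest hord
  have hp₁ : p 1 = p' 1 :=
    hord.antisymm _ _ hmem.isPrime hmem'.isPrime (hmax' _ hmem) (hmax _ hmem')
  have hN₁ : N 1 = N' 1 := by rw [h.eq_primaryComponent hord, h'.eq_primaryComponent hord, hp₁]
  have hnm : n = 1 ↔ m = 1 := by rw [h.eq_one_iff, h'.eq_one_iff, hN₁]
  rcases (by have := h.1; omega : n = 1 ∨ 2 ≤ n) with rfl | hn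
  · obtain rfl := hnm.mp rfl
    refine ⟨rfl, fun i hi => ?_, fun i hi hi' => by obtain rfl : i = 1 := (by omega); exact hp₁⟩
    obtain rfl | rfl : i = 0 ∨ i = 1 := by omega
    exacts [h.2.1.trans h'.2.1.symm, hN₁]
  have hm : 2 ≤ m := by have := h'.1; omega
  have ht' := h'.tail hm
  rw [← hN₁] at ht'
  obtain ⟨hnm', hNt, hpt⟩ := ih (n - 1) (by omega) (h.tail hn) ht'
  refine ⟨by omega, fun i hi => ?_, fun i hi hin => ?_⟩
  · rcases i with _ | i
    · exact h.2.1.trans h'.2.1.symm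
    rw [← h.comap_map_mkQ (by omega) hi, hNt i (by omega), Submodule.comap_map_mkQ, hN₁,
      sup_eq_right.mpr (h'.mono (by omega) (by omega))]
  · obtain rfl | ⟨j, rfl⟩ : i = 1 ∨ ∃ j, i = j + 2 := by
      rcases i with _ | _ | j <;> simp_all
    exacts [hp₁, hpt (j + 1) (by omega) (by omega)]

lemma of_associatedPrimes_eq_singleton {q : Ideal R} (hM : associatedPrimes R M = {q}) :
    IsCoprimaryFiltration le 1 (fun i => if i = 0 then ⊥ else ⊤ : ℕ → Submodule R M)
      (fun _ => q) := by
  have hq : q ∈ associatedPrimes R M := hM ▸ Set.mem_singleton q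
  have := nontrivial_of_mem_associatedPrimes hq
  refine ⟨le_rfl, rfl, rfl, fun i hi => ?_, fun _ _ _ => hq.isPrime, fun i hi => by omega,
    fun i hi => ?_⟩
  all_goals obtain rfl : i = 0 := by omega
  · exact bot_lt_top
  · show associatedPrimes R
      (↥(⊤ : Submodule R M) ⧸ (⊥ : Submodule R M).comap (⊤ : Submodule R M).subtype) = {q}
    rw [associatedPrimes_subquotient_bot, LinearEquiv.AssociatedPrimes.eq topEquiv, hM]

lemma cons {K : Submodule R M} {q : Ideal R} (hK : associatedPrimes R K = {q})
    {N : ℕ → Submodule R (M ⧸ K)} (h : IsCoprimaryFiltration le n N p)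
    (hq : le (p 1) q ∧ p 1 ≠ q) :
    IsCoprimaryFiltration le (n + 1) (fun | 0 => ⊥ | i + 1 => (N i).comap K.mkQ)
      (fun | 0 | 1 => q | i + 2 => p (i + 1)) := by
  obtain ⟨hn, h0, htop, hlt, hprime, hstep, hass⟩ := h
  have hK0 : (N 0).comap K.mkQ = K := by rw [h0, comap_bot, ker_mkQ]
  refine ⟨by omega, rfl, ?_, fun i hi => ?_, fun i hi hin => ?_, fun i hi => ?_, fun i hi => ?_⟩
  · show (N n).comap K.mkQ = ⊤
    rw [htop, comap_top]
  · rcases i with _ | i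
    · show ⊥ < (N 0).comap K.mkQ
      rw [hK0, bot_lt_iff_ne_bot, ← nontrivial_iff_ne_bot]
      exact nontrivial_of_mem_associatedPrimes (hK ▸ Set.mem_singleton q)
    · exact (comap_lt_comap_iff_of_surjective (mkQ_surjective K)).mpr (hlt i (by omega))
  · rcases i with _ | _ | i
    · omega
    · exact (hK ▸ Set.mem_singleton q : q ∈ associatedPrimes R K).isPrime
    · exact hprime (i + 1) (by omega) (by omega)
  · rcases i with _ | i
    · exact hq
    · exact hstep i (by omega)
  · rcases i with _ | i
    · show associatedPrimes R (↥((N 0).comap K.mkQ) ⧸ (⊥ : Submodule R M).comap _) = {q}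
      rw [associatedPrimes_subquotient_bot, hK0, hK]
    · exact (associatedPrimes_subquotient_comap (mkQ_surjective K) _ _).trans (hass i (by omega))

end IsCoprimaryFiltration

theorem exists_isCoprimaryFiltration {R M : Type*} [CommRing R] [IsNoetherianRing R]
    [AddCommGroup M] [Module R M] [Module.Finite R M] [Nontrivial M]
    {le : Ideal R → Ideal R → Prop} (hord : IsLinearExtensionOfInclusion le) :
    ∃ n N p, IsCoprimaryFiltration le n (N : ℕ → Submodule R M) p := by
  induction hk : (associatedPrimes R M).ncard using Nat.strong_induction_on generalizing M with
  | _ k ih =>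
  obtain ⟨q, hq, hmax⟩ := hord.exists_greatest (associatedPrimes.finite R M)
    (associatedPrimes.nonempty R M) fun _ hq => hq.isPrime
  have hK := hord.associatedPrimes_primaryComponent_eq_singleton hq hmax
  by_cases htop : primaryComponent M q = ⊤
  · rw [htop, LinearEquiv.AssociatedPrimes.eq topEquiv] at hK
    exact ⟨1, _, _, .of_associatedPrimes_eq_singleton hK⟩
  have : Nontrivial (M ⧸ primaryComponent M q) := Submodule.Quotient.nontrivial_iff.mpr htop
  have hquot (r) (hr : r ∈ associatedPrimes R (M ⧸ primaryComponent M q)) :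
      r ∈ associatedPrimes R M ∧ r ≠ q :=
    have hr := associatedPrimes_quotient_primaryComponent_subset hr
    ⟨hr.1, fun e => hr.2 e.ge⟩
  have hlt : (associatedPrimes R (M ⧸ primaryComponent M q)).ncard < k := hk ▸
    Set.ncard_lt_ncard ((Set.ssubset_iff_of_subset fun r hr => (hquot r hr).1).mpr
      ⟨q, hq, fun h => (hquot q h).2 rfl⟩) (associatedPrimes.finite R M)
  obtain ⟨n, N, p, h⟩ := ih _ hlt rfl
  obtain ⟨hp₁, hp₁q⟩ := hquot _ (h.greatest hord).1
  exact ⟨n + 1, _, _, h.cons hK ⟨hmax _ hp₁, hp₁q⟩⟩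

theorem stmt8 {R M : Type*} [CommRing R] [IsNoetherianRing R]
    [AddCommGroup M] [Module R M] [Module.Finite R M] [Nontrivial M]
    -- a linear order on the prime ideals of `R` extending inclusion
    (le : Ideal R → Ideal R → Prop)
    (hrefl : ∀ p : Ideal R, p.IsPrime → le p p)
    (htrans : ∀ p q s : Ideal R, p.IsPrime → q.IsPrime → s.IsPrime →
      le p q → le q s → le p s)
    (hantisymm : ∀ p q : Ideal R, p.IsPrime → q.IsPrime → le p q → le q p → p = q)
    (htotal : ∀ p q : Ideal R, p.IsPrime → q.IsPrime → le p q ∨ le q p)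
    (hext : ∀ p q : Ideal R, p.IsPrime → q.IsPrime → p ≤ q → le p q) :
    (∃ n : ℕ, ∃ N : ℕ → Submodule R M, ∃ p : ℕ → Ideal R,
      IsCoprimaryFiltration le n N p) ∧
    (∀ n m : ℕ, ∀ N N' : ℕ → Submodule R M, ∀ p p' : ℕ → Ideal R,
      IsCoprimaryFiltration le n N p → IsCoprimaryFiltration le m N' p' →
      n = m ∧ (∀ i ≤ n, N i = N' i) ∧ (∀ i, 1 ≤ i → i ≤ n → p i = p' i)) := by
  have hord : IsLinearExtensionOfInclusion le := ⟨hrefl, htrans, hantisymm, htotal, hext⟩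
  exact ⟨exists_isCoprimaryFiltration hord, fun _ _ _ _ _ _ h h' => h.unique hord h'⟩
end

section
/- Let N' ⊊ N be submodules of M, and let p be the ≼-least element of the set Ass(N/N') of associated primes of N/N' (a finite nonempty set since R is Noetherian and N/N' is a nonzero finitely generated R-module). Then: (i) for every submodule N'' with N' ⊆ N'' ⊊ N and every associated prime q of N/N'', one has p ≼ q; (ii) there exists a submodule N'' with N' ⊆ N'' ⊊ N such that the set of associated primes of N/N'' equals {p}. -/
/-! Every associated prime of a quotient of `X` contains a minimal prime over the annihilator of
a lift of its witness, and such minimal primes are associated primes of `X`; as `≼` extends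
inclusion, this gives (i). For (ii), take by Zorn a submodule `W` of `N/N'` maximal with
`p ∉ Ass W`. Then `p ∈ Ass((N/N')/W)`, and if `q = ann x̄ ∈ Ass((N/N')/W)`, the preimage `W'` of
`R x̄ ≅ R/q` strictly contains `W`, so `p ∈ Ass W' ⊆ Ass W ∪ {q}` forces `q = p`. -/

open Submodule

section CommSemiring

variable {R M M' : Type*} [CommSemiring R] [AddCommMonoid M] [Module R M]
  [AddCommMonoid M'] [Module R M']

theorem mem_associatedPrimes_submodule_iff {W : Submodule R M} {p : Ideal R} :
    p ∈ associatedPrimes R W ↔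
      p.IsPrime ∧ ∃ x ∈ W, p = ((⊥ : Submodule R M).colon {x}).radical := by
  have hcolon (x : W) : (⊥ : Submodule R W).colon {x} = (⊥ : Submodule R M).colon {(x : M)} := by
    ext r
    simp only [mem_colon_singleton, mem_bot, ← coe_smul, ZeroMemClass.coe_eq_zero]
  simp only [AssociatedPrimes.mem_iff, IsAssociatedPrime, Submodule.isAssociatedPrime_def, hcolon,
    Subtype.exists, exists_prop]

theorem exists_maximal_notMem_associatedPrimes (p : Ideal R) :
    ∃ W : Submodule R M, Maximal (fun W : Submodule R M ↦ p ∉ associatedPrimes R W) W := by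
  have hchain : ∀ c ⊆ {W : Submodule R M | p ∉ associatedPrimes R W}, IsChain (· ≤ ·) c →
      ∀ W ∈ c, ∃ ub ∈ {W : Submodule R M | p ∉ associatedPrimes R W}, ∀ V ∈ c, V ≤ ub := by
    intro c hcS hc W hW
    refine ⟨sSup c, fun hp ↦ ?_, fun _ ↦ le_sSup⟩
    obtain ⟨hpp, x, hx, rfl⟩ := mem_associatedPrimes_submodule_iff.mp hp
    obtain ⟨V, hV, hxV⟩ := (mem_sSup_of_directed ⟨W, hW⟩ hc.directedOn).mp hx
    exact hcS hV (mem_associatedPrimes_submodule_iff.mpr ⟨hpp, x, hxV, rfl⟩)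
  obtain ⟨W, -, hW⟩ := zorn_le_nonempty₀ _ hchain ⊥ <| by
    simp [associatedPrimes.eq_empty_of_subsingleton]
  exact ⟨W, hW⟩

variable [IsNoetherianRing R]

theorem exists_mem_associatedPrimes_le_of_colon_le {q : Ideal R} [q.IsPrime] {x : M}
    (h : (⊥ : Submodule R M).colon {x} ≤ q) : ∃ P ∈ associatedPrimes R M, P ≤ q := by
  obtain ⟨P, hP, hPq⟩ := Ideal.exists_minimalPrimes_le h
  obtain ⟨y, rfl⟩ := exists_eq_colon_of_mem_minimalPrimes hP
  exact ⟨_, isAssociatedPrime_iff.mpr ⟨hP.1.1, y, rfl⟩, hPq⟩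

theorem exists_mem_associatedPrimes_le_of_surjective {f : M →ₗ[R] M'}
    (hf : Function.Surjective f) {q : Ideal R} (hq : q ∈ associatedPrimes R M') :
    ∃ P ∈ associatedPrimes R M, P ≤ q := by
  obtain ⟨hqp, y, rfl⟩ := isAssociatedPrime_iff.mp hq
  obtain ⟨x, rfl⟩ := hf y
  refine exists_mem_associatedPrimes_le_of_colon_le (x := x) fun r hr ↦ ?_
  rw [mem_colon_singleton, mem_bot] at hr ⊢
  rw [← map_smul, hr, map_zero]

end CommSemiring

section CommRing

variable {R M : Type*} [CommRing R] [AddCommGroup M] [Module R M]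

theorem associatedPrimes_comap_mkQ_subset (W : Submodule R M) (K : Submodule R (M ⧸ W)) :
    associatedPrimes R (K.comap W.mkQ) ⊆ associatedPrimes R W ∪ associatedPrimes R K := by
  have hW : W ≤ K.comap W.mkQ := le_comap_mkQ W _
  refine associatedPrimes.subset_union_of_exact (inclusion_injective hW)
    (g := W.mkQ.restrict fun _ h ↦ h) fun y ↦ ?_
  simp only [LinearMap.restrict_apply, mkQ_apply, Subtype.ext_iff, ZeroMemClass.coe_zero,
    Quotient.mk_eq_zero, Set.mem_range, coe_inclusion, Subtype.exists, exists_prop,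
    exists_eq_right]

variable [IsNoetherianRing R]

theorem associatedPrimes_span_singleton_of_isPrime {x : M}
    (hx : ((⊥ : Submodule R M).colon {x}).IsPrime) :
    associatedPrimes R (R ∙ x) = {(⊥ : Submodule R M).colon {x}} := by
  have htorsion : Ideal.torsionOf R M x = (⊥ : Submodule R M).colon {x} := by
    ext r
    rw [Ideal.mem_torsionOf_iff, mem_colon_singleton, mem_bot]
  rw [← LinearEquiv.AssociatedPrimes.eq (Ideal.quotTorsionOfEquivSpanSingleton R M x), htorsion,
    associatedPrimes.eq_singleton_of_isPrimary hx.isPrimary, hx.radical]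

theorem exists_associatedPrimes_quotient_eq_singleton {p : Ideal R}
    (hp : p ∈ associatedPrimes R M) : ∃ W : Submodule R M, associatedPrimes R (M ⧸ W) = {p} := by
  obtain ⟨W, hW⟩ := exists_maximal_notMem_associatedPrimes (M := M) p
  refine ⟨W, Set.Subset.antisymm (fun q hq ↦ ?_) (Set.singleton_subset_iff.mpr ?_)⟩
  · obtain ⟨hqp, y, rfl⟩ := isAssociatedPrime_iff.mp hq
    obtain ⟨x, rfl⟩ := W.mkQ_surjective y
    have hxW : x ∉ W := fun hx ↦ hqp.ne_top <| by
      rw [mkQ_apply, (Quotient.mk_eq_zero W).mpr hx, colon_singleton_zero]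
    have hlt : W < (R ∙ W.mkQ x).comap W.mkQ := SetLike.lt_iff_le_and_exists.mpr
      ⟨le_comap_mkQ W _, x, mem_span_singleton_self _, hxW⟩
    have hpK := associatedPrimes_comap_mkQ_subset W _ (not_not.mp (hW.not_prop_of_gt hlt))
    rw [associatedPrimes_span_singleton_of_isPrime hqp] at hpK
    exact (hpK.resolve_left hW.prop).symm
  · exact (associatedPrimes.subset_union_of_exact W.injective_subtype
      (LinearMap.exact_subtype_mkQ W) hp).resolve_left hW.prop

theorem exists_le_associatedPrimes_quotient_eq_singleton {L : Submodule R M} {p : Ideal R}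
    (hp : p ∈ associatedPrimes R (M ⧸ L)) :
    ∃ L' : Submodule R M, L ≤ L' ∧ associatedPrimes R (M ⧸ L') = {p} := by
  obtain ⟨W, hW⟩ := exists_associatedPrimes_quotient_eq_singleton hp
  have hL : L ≤ W.comap L.mkQ := le_comap_mkQ L _
  refine ⟨W.comap L.mkQ, hL, ?_⟩
  rw [← LinearEquiv.AssociatedPrimes.eq (quotientQuotientEquivQuotient L _ hL),
    map_comap_eq_of_surjective L.mkQ_surjective, hW]

end CommRing

theorem stmt9_general {R M : Type*} [CommRing R] [IsNoetherianRing R]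
    [AddCommGroup M] [Module R M]
    -- a linear order on the prime ideals of `R` extending inclusion
    (le : Ideal R → Ideal R → Prop)
    (htrans : ∀ p q s : Ideal R, p.IsPrime → q.IsPrime → s.IsPrime →
      le p q → le q s → le p s)
    (hext : ∀ p q : Ideal R, p.IsPrime → q.IsPrime → p ≤ q → le p q)
    (N' N : Submodule R M) (hN'N : N' < N)
    -- `p` is the `≼`-least element of `Ass(N/N')`
    (p : Ideal R) (hp : p ∈ associatedPrimes R (↥N ⧸ N'.comap N.subtype))
    (hleast : ∀ q ∈ associatedPrimes R (↥N ⧸ N'.comap N.subtype), le p q) :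
    -- (i)
    (∀ N'' : Submodule R M, N' ≤ N'' → N'' < N →
      ∀ q ∈ associatedPrimes R (↥N ⧸ N''.comap N.subtype), le p q) ∧
    -- (ii)
    (∃ N'' : Submodule R M, N' ≤ N'' ∧ N'' < N ∧
      associatedPrimes R (↥N ⧸ N''.comap N.subtype) = {p}) := by
  refine ⟨fun N'' hN'N'' _ q hq ↦ ?_, ?_⟩
  · obtain ⟨P, hP, hPq⟩ :=
      exists_mem_associatedPrimes_le_of_surjective (factor_surjective (comap_mono hN'N'')) hq
    exact htrans p P q hp.1 hP.1 hq.1 (hleast P hP) (hext P q hP.1 hq.1 hPq)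
  · obtain ⟨L, hN'L, hL⟩ := exists_le_associatedPrimes_quotient_eq_singleton hp
    have hLtop : L ≠ ⊤ := by
      rintro rfl
      simp [associatedPrimes.eq_empty_of_subsingleton] at hL
    have hcomap : (L.map N.subtype).comap N.subtype = L :=
      comap_map_eq_of_injective N.injective_subtype L
    refine ⟨L.map N.subtype, ?_, lt_of_le_of_ne (map_subtype_le N L) fun h ↦ ?_, by rwa [hcomap]⟩
    · calc N' = (N'.comap N.subtype).map N.subtype := by
            rw [map_comap_subtype, inf_eq_right.mpr hN'N.le]
        _ ≤ L.map N.subtype := map_mono hN'L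
    · exact hLtop (by rw [← hcomap, h, comap_subtype_self])

theorem stmt9 {R M : Type*} [CommRing R] [IsNoetherianRing R]
    [AddCommGroup M] [Module R M] [Module.Finite R M] [Nontrivial M]
    -- a linear order on the prime ideals of `R` extending inclusion
    (le : Ideal R → Ideal R → Prop)
    (hrefl : ∀ p : Ideal R, p.IsPrime → le p p)
    (htrans : ∀ p q s : Ideal R, p.IsPrime → q.IsPrime → s.IsPrime →
      le p q → le q s → le p s)
    (hantisymm : ∀ p q : Ideal R, p.IsPrime → q.IsPrime → le p q → le q p → p = q)
    (htotal : ∀ p q : Ideal R, p.IsPrime → q.IsPrime → le p q ∨ le q p)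
    (hext : ∀ p q : Ideal R, p.IsPrime → q.IsPrime → p ≤ q → le p q)
    (N' N : Submodule R M) (hN'N : N' < N)
    -- `p` is the `≼`-least element of `Ass(N/N')`
    (p : Ideal R) (hp : p ∈ associatedPrimes R (↥N ⧸ N'.comap N.subtype))
    (hleast : ∀ q ∈ associatedPrimes R (↥N ⧸ N'.comap N.subtype), le p q) :
    -- (i)
    (∀ N'' : Submodule R M, N' ≤ N'' → N'' < N →
      ∀ q ∈ associatedPrimes R (↥N ⧸ N''.comap N.subtype), le p q) ∧
    -- (ii)
    (∃ N'' : Submodule R M, N' ≤ N'' ∧ N'' < N ∧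
      associatedPrimes R (↥N ⧸ N''.comap N.subtype) = {p}) :=
  stmt9_general le htrans hext N' N hN'N p hp hleast
end

section
/- Assume: (1) for every strictly increasing sequence x₀ < x₁ < x₂ < ⋯ in 𝓛 there exists N ∈ ℕ with μ(x_N, x_{N+1}) ≤ μ(x_N, ⊤); and (2) for all x, y ∈ 𝓛 with x < y < ⊤, either μ(x,y) ≤ μ(x,⊤) or μ(y,⊤) ≤ μ(x,⊤). Then μ_A* = inf_{x ∈ 𝓛, x < ⊤} μ(x,⊤); in particular μ_A* ≤ μ_B*. -/
variable {L : Type*} {S : Type*}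

/-- `μ_A* := inf_{x < ⊤} sup_{x < y} μ(x,y)`. -/
def muAstar [PartialOrder L] [BoundedOrder L] [CompleteLattice S] (μ : L → L → S) : S :=
  ⨅ x ∈ {x : L | x < ⊤}, ⨆ y ∈ {y : L | x < y}, μ x y

/-- `μ_B* := sup_{⊥ < y} inf_{x < y} μ(x,y)`. -/
def muBstar [PartialOrder L] [BoundedOrder L] [CompleteLattice S] (μ : L → L → S) : S :=
  ⨆ y ∈ {y : L | ⊥ < y}, ⨅ x ∈ {x : L | x < y}, μ x y

/-- `μ_max(⊤) := sup_{⊥ < y} μ(⊥,y)`. -/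
def muMaxTop [PartialOrder L] [BoundedOrder L] [CompleteLattice S] (μ : L → L → S) : S :=
  ⨆ y ∈ {y : L | ⊥ < y}, μ ⊥ y

/-- `μ_min(⊤) := inf_{x < ⊤} μ(x,⊤)`. -/
def muMinTop [PartialOrder L] [BoundedOrder L] [CompleteLattice S] (μ : L → L → S) : S :=
  ⨅ x ∈ {x : L | x < ⊤}, μ x ⊤

theorem stmt10 [PartialOrder L] [BoundedOrder L] [CompleteLattice S]
    (hbt : (⊥ : L) ≠ ⊤) (μ : L → L → S)
    (h1 : ∀ f : ℕ → L, StrictMono f → ∃ N : ℕ, μ (f N) (f (N + 1)) ≤ μ (f N) ⊤)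
    (h2 : ∀ x y : L, x < y → y < ⊤ → μ x y ≤ μ x ⊤ ∨ μ y ⊤ ≤ μ x ⊤) :
    muAstar μ = muMinTop μ ∧ muAstar μ ≤ muBstar μ := by
  have key : ∀ x : L, x < ⊤ → ∃ x', x ≤ x' ∧ x' < ⊤ ∧ μ x' ⊤ ≤ μ x ⊤ ∧
      ∀ y, x' < y → μ x' y ≤ μ x' ⊤ := by
    intro x hx
    by_contra hc
    push_neg at hc
    have step : ∀ t : {z : L // x ≤ z ∧ z < ⊤ ∧ μ z ⊤ ≤ μ x ⊤},
        ∃ t' : {z : L // x ≤ z ∧ z < ⊤ ∧ μ z ⊤ ≤ μ x ⊤},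
          t.1 < t'.1 ∧ ¬ μ t.1 t'.1 ≤ μ t.1 ⊤ := by
      rintro ⟨z, hxz, hzt, hmz⟩
      obtain ⟨y, hzy, hny⟩ := hc z hxz hzt hmz
      have hyt : y < ⊤ := lt_top_iff_ne_top.mpr (by rintro rfl; exact hny le_rfl)
      rcases h2 z y hzy hyt with h | h
      · exact absurd h hny
      · exact ⟨⟨y, hxz.trans hzy.le, hyt, h.trans hmz⟩, hzy, hny⟩
    choose st hst1 hst2 using step
    set g : ℕ → {z : L // x ≤ z ∧ z < ⊤ ∧ μ z ⊤ ≤ μ x ⊤} :=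
      fun n => st^[n] ⟨x, le_rfl, hx, le_rfl⟩ with hg
    have hgsucc : ∀ n, g (n + 1) = st (g n) := fun n => Function.iterate_succ_apply' st n _
    have hmono : StrictMono (fun n => (g n).1) :=
      strictMono_nat_of_lt_succ (fun n => by rw [hgsucc]; exact hst1 (g n))
    obtain ⟨N, hN⟩ := h1 _ hmono
    have : ¬ μ (g N).1 (g (N + 1)).1 ≤ μ (g N).1 ⊤ := by rw [hgsucc]; exact hst2 (g N)
    exact this hN
  have heq : muAstar μ = muMinTop μ := by
    apply le_antisymm
    · refine le_iInf₂ fun x hx => ?_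
      obtain ⟨x', hxx', hx't, hmu, hP⟩ := key x hx
      calc muAstar μ ≤ ⨆ y ∈ {y : L | x' < y}, μ x' y :=
        iInf₂_le (f := fun x (_ : x ∈ {x : L | x < ⊤}) => ⨆ y ∈ {y : L | x < y}, μ x y) x' hx't
        _ ≤ μ x' ⊤ := iSup₂_le fun y hy => hP y hy
        _ ≤ μ x ⊤ := hmu
    · exact le_iInf₂ fun x hx =>
        (iInf₂_le x hx).trans (le_iSup₂ (f := fun y (_ : y ∈ {y : L | x < y}) => μ x y) ⊤ hx)
  refine ⟨heq, ?_⟩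
  rw [heq]
  exact le_iSup₂_of_le ⊤ (hbt.lt_top) le_rfl
end

section
/- Assume the pay-off function μ is slope-like. Then the following are equivalent: (a) μ_max(⊤) = μ(⊥,⊤); (b) μ_min(⊤) = μ(⊥,⊤); (c) μ_min(⊤) = μ_max(⊤). If in addition (1) for every strictly increasing sequence x₀ < x₁ < ⋯ in 𝓛 there exists N ∈ ℕ with μ(x_N, x_{N+1}) ≤ μ(x_N, ⊤), and (1~) for every strictly decreasing sequence x₀ > x₁ > ⋯ in 𝓛 there exists N ∈ ℕ with μ(⊥, x_N) ≤ μ(x_{N+1}, x_N), then conditions (a)–(c) are also equivalent to (d) μ_A* = μ_B* (the Harder-Narasimhan game has Nash equilibrium). -/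
variable {L : Type*} {S : Type*}

/-- A pay-off function `μ` is slope-like if for all `x < y < z` the four
conditions of Definition of slope-like pay-off functions hold. -/
def SlopeLike [Preorder L] [Preorder S] (μ : L → L → S) : Prop :=
  ∀ x y z : L, x < y → y < z →
    (μ x y ≤ μ x z ∨ μ y z < μ x z) ∧
    (μ x y < μ x z ∨ μ y z ≤ μ x z) ∧
    (μ x z < μ x y ∨ μ x z ≤ μ y z) ∧
    (μ x z ≤ μ x y ∨ μ x z < μ y z)

section Seesaw
variable [Preorder L] [Preorder S] {μ : L → L → S}

lemma seesaw1 (hsl : SlopeLike μ) {x y z : L} (hxy : x < y) (hyz : y < z)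
    (h : μ x y ≤ μ x z) : μ x z ≤ μ y z := by
  rcases (hsl x y z hxy hyz).2.2.1 with h1 | h1
  · exact absurd (h1.trans_le h) (lt_irrefl _)
  · exact h1

lemma seesaw2 (hsl : SlopeLike μ) {x y z : L} (hxy : x < y) (hyz : y < z)
    (h : μ x z ≤ μ y z) : μ x y ≤ μ x z := by
  rcases (hsl x y z hxy hyz).1 with h1 | h1
  · exact h1
  · exact absurd (h1.trans_le h) (lt_irrefl _)

lemma strict1 (hsl : SlopeLike μ) {x y z : L} (hxy : x < y) (hyz : y < z)
    (h : ¬ μ x y ≤ μ x z) : μ y z < μ x z :=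
  ((hsl x y z hxy hyz).1).resolve_left h

lemma strict2 (hsl : SlopeLike μ) {x y z : L} (hxy : x < y) (hyz : y < z)
    (h : ¬ μ x z ≤ μ y z) : μ x z < μ x y :=
  ((hsl x y z hxy hyz).2.2.1).resolve_right h

end Seesaw

lemma chainAbsurd {α : Type*} [Preorder α] {Q : α → Prop} {P : α → α → Prop}
    (hstep : ∀ a, Q a → ∃ b, Q b ∧ a < b ∧ P a b) {a0 : α} (h0 : Q a0)
    (hchain : ∀ f : ℕ → α, StrictMono f → ∃ N, ¬ P (f N) (f (N + 1))) : False := by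
  choose g hg1 hg2 hg3 using hstep
  let f : ℕ → {a : α // Q a} := fun n =>
    Nat.rec ⟨a0, h0⟩ (fun _ p => ⟨g p.1 p.2, hg1 p.1 p.2⟩) n
  have hmono : StrictMono fun n => (f n).1 :=
    strictMono_nat_of_lt_succ fun n => hg2 (f n).1 (f n).2
  obtain ⟨N, hN⟩ := hchain _ hmono
  exact hN (hg3 (f N).1 (f N).2)

lemma chainAbsurdAnti {α : Type*} [Preorder α] {Q : α → Prop} {P : α → α → Prop}
    (hstep : ∀ a, Q a → ∃ b, Q b ∧ b < a ∧ P a b) {a0 : α} (h0 : Q a0)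
    (hchain : ∀ f : ℕ → α, StrictAnti f → ∃ N, ¬ P (f N) (f (N + 1))) : False := by
  choose g hg1 hg2 hg3 using hstep
  let f : ℕ → {a : α // Q a} := fun n =>
    Nat.rec ⟨a0, h0⟩ (fun _ p => ⟨g p.1 p.2, hg1 p.1 p.2⟩) n
  have hanti : StrictAnti fun n => (f n).1 :=
    strictAnti_nat_of_succ_lt fun n => hg2 (f n).1 (f n).2
  obtain ⟨N, hN⟩ := hchain _ hanti
  exact hN (hg3 (f N).1 (f N).2)

/-- Under chain condition (1), `μ_A* ≤ μ_min(⊤)`. -/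
lemma muAstar_le_muMinTop [PartialOrder L] [BoundedOrder L] [CompleteLattice S]
    {μ : L → L → S} (hsl : SlopeLike μ)
    (chain1 : ∀ f : ℕ → L, StrictMono f → ∃ N : ℕ, μ (f N) (f (N + 1)) ≤ μ (f N) ⊤) :
    muAstar μ ≤ muMinTop μ := by
  refine le_iInf₂ fun x hx => ?_
  have hx' : x < ⊤ := hx
  have key : ∃ x', x' < ⊤ ∧ μ x' ⊤ ≤ μ x ⊤ ∧ ∀ y, x' < y → y < ⊤ → μ x' y ≤ μ x' ⊤ := by
    by_contra hcon
    push_neg at hcon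
    refine chainAbsurd (Q := fun a => a < ⊤ ∧ μ a ⊤ ≤ μ x ⊤)
      (P := fun a b => ¬ μ a b ≤ μ a ⊤) (fun a ha => ?_) ⟨hx', le_rfl⟩ (fun f hf => ?_)
    · obtain ⟨y, h1, h2, h3⟩ := hcon a ha.1 ha.2
      exact ⟨y, ⟨h2, (strict1 hsl h1 h2 h3).le.trans ha.2⟩, h1, h3⟩
    · obtain ⟨N, hN⟩ := chain1 f hf
      exact ⟨N, not_not.mpr hN⟩
  obtain ⟨x', hx'top, hle, hgood⟩ := key
  have h1 : muAstar μ ≤ ⨆ y ∈ {y : L | x' < y}, μ x' y :=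
    iInf₂_le (f := fun x (_ : x ∈ {x : L | x < ⊤}) => ⨆ y ∈ {y : L | x < y}, μ x y) x' hx'top
  have h2 : (⨆ y ∈ {y : L | x' < y}, μ x' y) ≤ μ x' ⊤ := by
    refine iSup₂_le fun y hy => ?_
    rcases lt_or_eq_of_le (le_top : y ≤ ⊤) with h | h
    · exact hgood y hy h
    · exact le_of_eq (by rw [h])
  exact (h1.trans h2).trans hle

/-- Under chain condition (1~), `μ_max(⊤) ≤ μ_B*`. -/
lemma muMaxTop_le_muBstar [PartialOrder L] [BoundedOrder L] [CompleteLattice S]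
    {μ : L → L → S} (hsl : SlopeLike μ)
    (chain2 : ∀ f : ℕ → L, StrictAnti f → ∃ N : ℕ, μ ⊥ (f N) ≤ μ (f (N + 1)) (f N)) :
    muMaxTop μ ≤ muBstar μ := by
  refine iSup₂_le fun y hy => ?_
  have hy' : (⊥ : L) < y := hy
  have key : ∃ y', (⊥ : L) < y' ∧ μ ⊥ y ≤ μ ⊥ y' ∧ ∀ x, ⊥ < x → x < y' → μ ⊥ y' ≤ μ x y' := by
    by_contra hcon
    push_neg at hcon
    refine chainAbsurdAnti (Q := fun a => (⊥ : L) < a ∧ μ ⊥ y ≤ μ ⊥ a)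
      (P := fun a b => ¬ μ ⊥ a ≤ μ b a) (fun a ha => ?_) ⟨hy', le_rfl⟩ (fun f hf => ?_)
    · obtain ⟨z, h1, h2, h3⟩ := hcon a ha.1 ha.2
      exact ⟨z, ⟨h1, ha.2.trans (strict2 hsl h1 h2 h3).le⟩, h2, h3⟩
    · obtain ⟨N, hN⟩ := chain2 f hf
      exact ⟨N, not_not.mpr hN⟩
  obtain ⟨y', hy'bot, hle, hgood⟩ := key
  have h2 : μ ⊥ y' ≤ ⨅ x ∈ {x : L | x < y'}, μ x y' := by
    refine le_iInf₂ fun x hx => ?_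
    rcases eq_or_lt_of_le (bot_le : (⊥ : L) ≤ x) with h | h
    · exact le_of_eq (by rw [← h])
    · exact hgood x h hx
  have h3 : (⨅ x ∈ {x : L | x < y'}, μ x y') ≤ muBstar μ :=
    le_iSup₂ (f := fun y (_ : y ∈ {y : L | ⊥ < y}) => ⨅ x ∈ {x : L | x < y}, μ x y) y' hy'bot
  exact hle.trans (h2.trans h3)

theorem stmt16 [PartialOrder L] [BoundedOrder L] [CompleteLattice S]
    (hbt : (⊥ : L) ≠ ⊤) (μ : L → L → S) (hsl : SlopeLike μ) :
    -- (a) ↔ (b) ↔ (c)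
    ((muMaxTop μ = μ ⊥ ⊤ ↔ muMinTop μ = μ ⊥ ⊤) ∧
      (muMinTop μ = μ ⊥ ⊤ ↔ muMinTop μ = muMaxTop μ)) ∧
    -- under the chain conditions, also ↔ (d)
    ((∀ f : ℕ → L, StrictMono f → ∃ N : ℕ, μ (f N) (f (N + 1)) ≤ μ (f N) ⊤) →
      (∀ f : ℕ → L, StrictAnti f → ∃ N : ℕ, μ ⊥ (f N) ≤ μ (f (N + 1)) (f N)) →
      (muMinTop μ = muMaxTop μ ↔ muAstar μ = muBstar μ)) := by
  have hb : (⊥ : L) < ⊤ := hbt.lt_top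
  have hmc : muMinTop μ ≤ μ ⊥ ⊤ :=
    iInf₂_le (f := fun x (_ : x ∈ {x : L | x < ⊤}) => μ x ⊤) ⊥ hb
  have hcM : μ ⊥ ⊤ ≤ muMaxTop μ :=
    le_iSup₂ (f := fun y (_ : y ∈ {y : L | ⊥ < y}) => μ ⊥ y) ⊤ hb
  have hab : (muMaxTop μ = μ ⊥ ⊤ ↔ muMinTop μ = μ ⊥ ⊤) := by
    constructor
    · intro hM
      refine le_antisymm hmc (le_iInf₂ fun x hx => ?_)
      have hx' : x < ⊤ := hx
      rcases eq_or_lt_of_le (bot_le : (⊥ : L) ≤ x) with h | h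
      · exact le_of_eq (by rw [← h])
      · have h1 : μ ⊥ x ≤ μ ⊥ ⊤ :=
          (le_iSup₂ (f := fun y (_ : y ∈ {y : L | ⊥ < y}) => μ ⊥ y) x h).trans hM.le
        exact seesaw1 hsl h hx' h1
    · intro hm
      refine le_antisymm (iSup₂_le fun y hy => ?_) hcM
      have hy' : (⊥ : L) < y := hy
      rcases lt_or_eq_of_le (le_top : y ≤ ⊤) with h | h
      · have h1 : μ ⊥ ⊤ ≤ μ y ⊤ := hm.symm.le.trans
          (iInf₂_le (f := fun x (_ : x ∈ {x : L | x < ⊤}) => μ x ⊤) y h)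
        exact seesaw2 hsl hy' h h1
      · exact le_of_eq (by rw [h])
  refine ⟨⟨hab, ?_⟩, ?_⟩
  · constructor
    · intro hm
      have hM := hab.mpr hm
      rw [hm, hM]
    · intro hcm
      exact le_antisymm hmc (hcM.trans hcm.ge)
  · intro chain1 chain2
    have hAM : muAstar μ ≤ muMaxTop μ :=
      iInf₂_le (f := fun x (_ : x ∈ {x : L | x < ⊤}) => ⨆ y ∈ {y : L | x < y}, μ x y) ⊥ hb
    have hmA : muMinTop μ ≤ muAstar μ :=
      iInf₂_mono fun x hx => le_iSup₂ (f := fun y (_ : y ∈ {y : L | x < y}) => μ x y) ⊤ hx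
    have hmB : muMinTop μ ≤ muBstar μ :=
      le_iSup₂ (f := fun y (_ : y ∈ {y : L | ⊥ < y}) => ⨅ x ∈ {x : L | x < y}, μ x y) ⊤ hb
    have hBM : muBstar μ ≤ muMaxTop μ := iSup₂_mono fun y hy =>
      iInf₂_le (f := fun x (_ : x ∈ {x : L | x < y}) => μ x y) ⊥ hy
    constructor
    · intro hcm
      have hA : muAstar μ = muMinTop μ := le_antisymm (hAM.trans hcm.ge) hmA
      have hB : muBstar μ = muMinTop μ := le_antisymm (hBM.trans hcm.ge) hmB
      rw [hA, hB]
    · intro hd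
      have hAm : muAstar μ ≤ muMinTop μ := muAstar_le_muMinTop hsl chain1
      have hMB : muMaxTop μ ≤ muBstar μ := muMaxTop_le_muBstar hsl chain2
      exact le_antisymm (hmc.trans hcM) (hMB.trans (hd.ge.trans hAm))
end

section
/- Assume that S is a complete totally ordered set. If the Harder-Narasimhan game with pay-off function μ is semi-stable, i.e. for every x ∈ 𝓛 \ {⊥} one does not have μ_A(⊤) < μ_A(x), then μ_B* ≤ μ_A*. -/
variable {L : Type*} {S : Type*}

theorem stmt17 [PartialOrder L] [BoundedOrder L] [CompleteLinearOrder S]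
    (hbt : (⊥ : L) ≠ ⊤) (μ : L → L → S)
    -- semi-stability of the Harder–Narasimhan game
    (hss : ∀ x : L, x ≠ ⊥ → ¬ muA μ ⊥ ⊤ < muA μ ⊥ x) :
    muBstar μ ≤ muAstar μ := by
  have hA : muA μ ⊥ ⊤ = muAstar μ := by
    simp [muA, muMax, muAstar, bot_le, le_top]
  rw [muBstar]
  apply iSup₂_le
  intro y hy
  have h' : muA μ ⊥ y ≤ muAstar μ := hA ▸ not_lt.mp (hss y hy.ne')
  refine le_trans ?_ h'
  rw [muA]
  apply le_iInf₂
  intro a ha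
  refine le_trans (iInf₂_le (κ := fun x => x ∈ {x : L | x < y}) a ha.2) ?_
  exact le_iSup₂ (f := fun b _ => μ a b) y ⟨ha.2, le_rfl⟩
end

section
/- Assume that for every x ∈ 𝓛 \ {⊥} the following two conditions hold: (i) for every strictly increasing sequence x₀ < x₁ < ⋯ in 𝓛 with xₙ ≤ x for all n, there exists N ∈ ℕ with μ(x_N, x_{N+1}) ≤ μ(x_N, x); and (ii) for all a, b ∈ 𝓛 with a < b < x, either μ(a,b) ≤ μ(a,x) or μ(b,x) ≤ μ(a,x). If μ_A* = μ_B* (the Harder-Narasimhan game has Nash equilibrium), then the game is semi-stable: for every x ∈ 𝓛 \ {⊥} one does not have μ_A(⊤) < μ_A(x). -/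
variable {L : Type*} {S : Type*}

theorem stmt18 [PartialOrder L] [BoundedOrder L] [CompleteLattice S]
    (hbt : (⊥ : L) ≠ ⊤) (μ : L → L → S)
    (h1 : ∀ x : L, x ≠ ⊥ → ∀ f : ℕ → L, StrictMono f → (∀ n, f n ≤ x) →
      ∃ N : ℕ, μ (f N) (f (N + 1)) ≤ μ (f N) x)
    (h2 : ∀ x : L, x ≠ ⊥ → ∀ a b : L, a < b → b < x →
      μ a b ≤ μ a x ∨ μ b x ≤ μ a x)
    (heq : muAstar μ = muBstar μ) :
    ∀ x : L, x ≠ ⊥ → ¬ muA μ ⊥ ⊤ < muA μ ⊥ x := by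
  intro x hx hlt
  -- Key lemma: every b < x satisfies muA μ ⊥ x ≤ μ b x.
  have key : ∀ b : L, b < x → muA μ ⊥ x ≤ μ b x := by
    by_contra hcon
    push_neg at hcon
    obtain ⟨b0, hb0x, hb0⟩ := hcon
    -- one step of the destabilizing chain
    have step : ∀ b : L, b < x → ¬ muA μ ⊥ x ≤ μ b x →
        ∃ c : L, (c < x ∧ ¬ muA μ ⊥ x ≤ μ c x) ∧ b < c ∧ ¬ μ b c ≤ μ b x := by
      intro b hbx hb
      have hmm : ¬ muMax μ b x ≤ μ b x := by
        intro h
        exact hb (le_trans (iInf₂_le b ⟨bot_le, hbx⟩) h)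
      have hex : ∃ c, (b < c ∧ c ≤ x) ∧ ¬ μ b c ≤ μ b x := by
        by_contra hall
        push_neg at hall
        exact hmm (iSup₂_le fun c hc => hall c hc)
      obtain ⟨c, ⟨hbc, hcx⟩, hμ⟩ := hex
      have hcx' : c < x := lt_of_le_of_ne hcx (by rintro rfl; exact hμ le_rfl)
      rcases h2 x hx b c hbc hcx' with h | h
      · exact absurd h hμ
      · exact ⟨c, ⟨hcx', fun hle => hb (hle.trans h)⟩, hbc, hμ⟩
    -- build the strictly increasing sequence
    have next : ∀ b : {b : L // b < x ∧ ¬ muA μ ⊥ x ≤ μ b x},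
        ∃ c : {b : L // b < x ∧ ¬ muA μ ⊥ x ≤ μ b x},
          (b : L) < (c : L) ∧ ¬ μ (b : L) (c : L) ≤ μ (b : L) x := by
      rintro ⟨b, hbx, hb⟩
      obtain ⟨c, hc, h3, h4⟩ := step b hbx hb
      exact ⟨⟨c, hc⟩, h3, h4⟩
    choose nxt hlt' hbad using next
    let f : ℕ → {b : L // b < x ∧ ¬ muA μ ⊥ x ≤ μ b x} :=
      fun n => Nat.rec ⟨b0, hb0x, hb0⟩ (fun _ b => nxt b) n
    have hfsucc : ∀ n, f (n + 1) = nxt (f n) := fun n => rfl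
    have hmono : StrictMono (fun n => (f n).1) := by
      apply strictMono_nat_of_lt_succ
      intro n
      exact hfsucc n ▸ hlt' (f n)
    have hlex : ∀ n, (f n).1 ≤ x := fun n => (f n).2.1.le
    obtain ⟨N, hN⟩ := h1 x hx _ hmono hlex
    exact hbad (f N) hN
  -- muA μ ⊥ x ≤ muBstar μ
  have hAx : muA μ ⊥ x ≤ muBstar μ := by
    have h1' : muA μ ⊥ x ≤ ⨅ b ∈ {b : L | b < x}, μ b x :=
      le_iInf₂ fun b hb => key b hb
    have h2' : (⨅ b ∈ {b : L | b < x}, μ b x) ≤ muBstar μ :=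
      le_iSup₂ (f := fun y (_ : y ∈ {y : L | ⊥ < y}) => ⨅ b ∈ {b : L | b < y}, μ b y)
        x (bot_lt_iff_ne_bot.2 hx)
    exact h1'.trans h2'
  -- muA μ ⊥ ⊤ = muAstar μ
  have htop : muA μ ⊥ ⊤ = muAstar μ := by
    unfold muA muAstar muMax
    simp only [Set.mem_setOf_eq, bot_le, true_and, le_top, and_true]
  have : muA μ ⊥ x ≤ muA μ ⊥ ⊤ := by
    rw [htop, heq]; exact hAx
  exact this.not_gt hlt
end

section
/- Assume: (i) for every strictly increasing sequence x₀ < x₁ < ⋯ in 𝓛 there exists N ∈ ℕ with μ(x_N, x_{N+1}) ≤ μ(x_N, ⊤); (ii) for every strictly decreasing sequence x₀ > x₁ > ⋯ in 𝓛 there exists N ∈ ℕ with μ(⊥, x_N) ≤ μ(x_{N+1}, x_N); (iii) S is a complete totally ordered set and the pay-off function μ is slope-like. Then the following statements are equivalent: (a) μ_max(⊤) = μ(⊥,⊤); (b) μ_min(⊤) = μ(⊥,⊤); (c) μ_min(⊤) = μ_max(⊤); (d) μ_A* = μ_B* (the Harder-Narasimhan game has Nash equilibrium); (e) for every x ∈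 𝓛 \ {⊥}, μ_A(x) ≤ μ_A(⊤) (the Harder-Narasimhan game is semi-stable). -/
variable {L : Type*} {S : Type*}

section AuxHN
variable [PartialOrder L] [BoundedOrder L] [CompleteLinearOrder S]

private lemma exists_seq {α : Type*} {P : α → α → Prop} {Q : α → Prop} (x0 : α) (hx0 : Q x0)
    (step : ∀ x, Q x → ∃ y, Q y ∧ P x y) :
    ∃ f : ℕ → α, (∀ n, Q (f n)) ∧ ∀ n, P (f n) (f (n + 1)) := by
  choose g hg1 hg2 using step
  let F : ℕ → {x : α // Q x} := fun n =>
    Nat.rec ⟨x0, hx0⟩ (fun _ p => ⟨g p.1 p.2, hg1 p.1 p.2⟩) n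
  exact ⟨fun n => (F n).1, fun n => (F n).2, fun n => hg2 (F n).1 (F n).2⟩

private lemma lemA_s19 (μ : L → L → S)
    (h1 : ∀ f : ℕ → L, StrictMono f → ∃ N : ℕ, μ (f N) (f (N + 1)) ≤ μ (f N) ⊤)
    (hsl : SlopeLike μ) : muAstar μ = muMinTop μ := by
  refine le_antisymm (le_iInf₂ fun x hx => ?_) (le_iInf₂ fun x hx => ?_)
  · by_contra hc
    push_neg at hc
    have hstep : ∀ z, (z < ⊤ ∧ μ z ⊤ < muAstar μ) →
        ∃ y, (y < ⊤ ∧ μ y ⊤ < muAstar μ) ∧ z < y ∧ μ z ⊤ < μ z y := by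
      rintro z ⟨hz1, hz2⟩
      have hstar : muAstar μ ≤ ⨆ y ∈ {y : L | z < y}, μ z y :=
        iInf₂_le (f := fun x (_ : x ∈ {x : L | x < ⊤}) => ⨆ y ∈ {y : L | x < y}, μ x y) z hz1
      have hsup : μ z ⊤ < ⨆ y ∈ {y : L | z < y}, μ z y := lt_of_lt_of_le hz2 hstar
      have hex : ∃ y, z < y ∧ μ z ⊤ < μ z y := by
        by_contra hc2
        push_neg at hc2
        exact absurd (iSup₂_le fun y hy => hc2 y hy) (not_le.mpr hsup)
      obtain ⟨y, hzy, hlt⟩ := hex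
      have hyt : y < ⊤ := lt_of_le_of_ne le_top (by rintro rfl; exact lt_irrefl _ hlt)
      have hsee : μ y ⊤ < μ z ⊤ := by
        rcases (hsl z y ⊤ hzy hyt).1 with h | h
        · exact absurd h (not_le.mpr hlt)
        · exact h
      exact ⟨y, ⟨hyt, hsee.trans hz2⟩, hzy, hlt⟩
    obtain ⟨f, hQ, hP⟩ := exists_seq (P := fun z y => z < y ∧ μ z ⊤ < μ z y)
      (Q := fun z => z < ⊤ ∧ μ z ⊤ < muAstar μ) x ⟨hx, hc⟩ hstep
    have hf : StrictMono f := strictMono_nat_of_lt_succ fun n => (hP n).1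
    obtain ⟨N, hN⟩ := h1 f hf
    exact absurd hN (not_le.mpr (hP N).2)
  · exact le_trans (iInf₂_le x hx) (le_iSup₂ (f := fun y _ => μ x y) ⊤ hx)

private lemma lemB_s19 (μ : L → L → S)
    (h2 : ∀ f : ℕ → L, StrictAnti f → ∃ N : ℕ, μ ⊥ (f N) ≤ μ (f (N + 1)) (f N))
    (hsl : SlopeLike μ) : muBstar μ = muMaxTop μ := by
  refine le_antisymm (iSup₂_le fun y hy => ?_) (iSup₂_le fun y hy => ?_)
  · exact le_trans (iInf₂_le ⊥ (show (⊥:L) ∈ {x : L | x < y} from hy)) (le_iSup₂ (f := fun z _ => μ ⊥ z) y hy)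
  · by_contra hc
    push_neg at hc
    have hstep : ∀ z, (⊥ < z ∧ muBstar μ < μ ⊥ z) →
        ∃ x, (⊥ < x ∧ muBstar μ < μ ⊥ x) ∧ x < z ∧ μ x z < μ ⊥ z := by
      rintro z ⟨hz1, hz2⟩
      have hstar : (⨅ x ∈ {x : L | x < z}, μ x z) ≤ muBstar μ :=
        le_iSup₂ (f := fun w (_ : (⊥:L) < w) => ⨅ x ∈ {x : L | x < w}, μ x w) z hz1
      have hinf : (⨅ x ∈ {x : L | x < z}, μ x z) < μ ⊥ z := lt_of_le_of_lt hstar hz2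
      have hex : ∃ x, x < z ∧ μ x z < μ ⊥ z := by
        by_contra hc2
        push_neg at hc2
        exact absurd (le_iInf₂ fun x hx => hc2 x hx) (not_le.mpr hinf)
      obtain ⟨x, hxz, hlt⟩ := hex
      have hbx : ⊥ < x := bot_le.lt_of_ne (by rintro rfl; exact lt_irrefl _ hlt)
      have hsee : μ ⊥ z < μ ⊥ x := by
        rcases (hsl ⊥ x z hbx hxz).2.2.1 with h | h
        · exact h
        · exact absurd h (not_le.mpr hlt)
      exact ⟨x, ⟨hbx, hz2.trans hsee⟩, hxz, hlt⟩
    obtain ⟨f, hQ, hP⟩ := exists_seq (P := fun z x => x < z ∧ μ x z < μ ⊥ z)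
      (Q := fun z => ⊥ < z ∧ muBstar μ < μ ⊥ z) y ⟨hy, hc⟩ hstep
    have hf : StrictAnti f := strictAnti_nat_of_succ_lt fun n => (hP n).1
    obtain ⟨N, hN⟩ := h2 f hf
    exact absurd hN (not_le.mpr (hP N).2)


end AuxHN

theorem stmt19 [PartialOrder L] [BoundedOrder L] [CompleteLinearOrder S]
    (hbt : (⊥ : L) ≠ ⊤) (μ : L → L → S)
    (h1 : ∀ f : ℕ → L, StrictMono f → ∃ N : ℕ, μ (f N) (f (N + 1)) ≤ μ (f N) ⊤)
    (h2 : ∀ f : ℕ → L, StrictAnti f → ∃ N : ℕ, μ ⊥ (f N) ≤ μ (f (N + 1)) (f N))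
    (hsl : SlopeLike μ) :
    -- (a) ↔ (b) ↔ (c) ↔ (d) ↔ (e)
    (muMaxTop μ = μ ⊥ ⊤ ↔ muMinTop μ = μ ⊥ ⊤) ∧
    (muMinTop μ = μ ⊥ ⊤ ↔ muMinTop μ = muMaxTop μ) ∧
    (muMinTop μ = muMaxTop μ ↔ muAstar μ = muBstar μ) ∧
    (muAstar μ = muBstar μ ↔ ∀ x : L, x ≠ ⊥ → muA μ ⊥ x ≤ muA μ ⊥ ⊤) := by
  have hbtlt : (⊥ : L) < ⊤ := hbt.lt_of_le bot_le
  have hA := lemA_s19 μ h1 hsl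
  have hB := lemB_s19 μ h2 hsl
  have hminle : muMinTop μ ≤ μ ⊥ ⊤ :=
    iInf₂_le (f := fun x (_ : x ∈ {x : L | x < ⊤}) => μ x ⊤) ⊥ hbtlt
  have hmaxge : μ ⊥ ⊤ ≤ muMaxTop μ :=
    le_iSup₂ (f := fun y (_ : y ∈ {y : L | (⊥:L) < y}) => μ ⊥ y) ⊤ hbtlt
  have hab : muMaxTop μ = μ ⊥ ⊤ ↔ muMinTop μ = μ ⊥ ⊤ := by
    constructor
    · intro h
      refine le_antisymm hminle (le_iInf₂ fun x hx => ?_)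
      rcases eq_or_lt_of_le (bot_le : (⊥:L) ≤ x) with rfl | hbx
      · exact le_rfl
      · rcases (hsl ⊥ x ⊤ hbx hx).2.2.1 with h' | h'
        · have hle : μ ⊥ x ≤ μ ⊥ ⊤ := h ▸
            le_iSup₂ (f := fun y (_ : y ∈ {y : L | (⊥:L) < y}) => μ ⊥ y) x hbx
          exact absurd h' (not_lt.mpr hle)
        · exact h'
    · intro h
      refine le_antisymm (iSup₂_le fun y hy => ?_) hmaxge
      rcases eq_or_lt_of_le (le_top : y ≤ ⊤) with rfl | hyt
      · exact le_rfl
      · rcases (hsl ⊥ y ⊤ hy hyt).1 with h' | h'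
        · exact h'
        · have hle : μ ⊥ ⊤ ≤ μ y ⊤ := h ▸
            iInf₂_le (f := fun x (_ : x ∈ {x : L | x < ⊤}) => μ x ⊤) y hyt
          exact absurd h' (not_lt.mpr hle)
  have hbc : muMinTop μ = μ ⊥ ⊤ ↔ muMinTop μ = muMaxTop μ := by
    constructor
    · intro h; rw [h, hab.mpr h]
    · intro h; exact le_antisymm hminle (by rw [h]; exact hmaxge)
  have hcd : muMinTop μ = muMaxTop μ ↔ muAstar μ = muBstar μ := by rw [hA, hB]
  have heA : muA μ ⊥ ⊤ = muAstar μ := by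
    simp only [muA, muAstar, muMax, Set.mem_setOf_eq, bot_le, true_and, le_top, and_true]
  have hde : muAstar μ = muBstar μ ↔ ∀ x : L, x ≠ ⊥ → muA μ ⊥ x ≤ muA μ ⊥ ⊤ := by
    constructor
    · intro h x hx
      have hbx : (⊥:L) < x := bot_le.lt_of_ne (Ne.symm hx)
      have ha1 : muA μ ⊥ x ≤ muMax μ ⊥ x :=
        iInf₂_le (f := fun a (_ : a ∈ {a : L | ⊥ ≤ a ∧ a < x}) => muMax μ a x) ⊥ ⟨le_rfl, hbx⟩
      have ha2 : muMax μ ⊥ x ≤ muMaxTop μ := iSup₂_le fun b hb =>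
        le_iSup₂ (f := fun y (_ : y ∈ {y : L | (⊥:L) < y}) => μ ⊥ y) b hb.1
      rw [heA, h, hB]
      exact ha1.trans ha2
    · intro he
      rw [hA, hB]
      refine le_antisymm (hminle.trans hmaxge) (iSup₂_le fun y hy => ?_)
      by_contra hc
      push_neg at hc
      have hstep : ∀ z, (⊥ < z ∧ muMinTop μ < μ ⊥ z) →
          ∃ a, (⊥ < a ∧ muMinTop μ < μ ⊥ a) ∧ a < z ∧ μ a z < μ ⊥ z := by
        rintro z ⟨hz1, hz2⟩
        have hz3 : muA μ ⊥ z < μ ⊥ z := by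
          calc muA μ ⊥ z ≤ muA μ ⊥ ⊤ := he z hz1.ne'
            _ = muAstar μ := heA
            _ = muMinTop μ := hA
            _ < μ ⊥ z := hz2
        have hex : ∃ a, (⊥ ≤ a ∧ a < z) ∧ muMax μ a z < μ ⊥ z := by
          by_contra hc2
          push_neg at hc2
          exact absurd (le_iInf₂ fun a ha => hc2 a ha) (not_le.mpr hz3)
        obtain ⟨a, ⟨_, haz⟩, hM⟩ := hex
        have hba : ⊥ < a := by
          rcases eq_or_lt_of_le (bot_le : (⊥:L) ≤ a) with rfl | h'
          · exact absurd (le_iSup₂ (f := fun b (_ : b ∈ {b : L | (⊥:L) < b ∧ b ≤ z}) => μ ⊥ b)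
              z ⟨hz1, le_rfl⟩) (not_le.mpr hM)
          · exact h'
        have hmu : μ a z < μ ⊥ z :=
          lt_of_le_of_lt (le_iSup₂ (f := fun b (_ : b ∈ {b : L | a < b ∧ b ≤ z}) => μ a b)
            z ⟨haz, le_rfl⟩) hM
        have hsee : μ ⊥ z < μ ⊥ a := by
          rcases (hsl ⊥ a z hba haz).2.2.1 with h' | h'
          · exact h'
          · exact absurd h' (not_le.mpr hmu)
        exact ⟨a, ⟨hba, hz2.trans hsee⟩, haz, hmu⟩
      obtain ⟨f, hQ, hP⟩ := exists_seq (P := fun z a => a < z ∧ μ a z < μ ⊥ z)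
        (Q := fun z => ⊥ < z ∧ muMinTop μ < μ ⊥ z) y ⟨hy, hc⟩ hstep
      have hf : StrictAnti f := strictAnti_nat_of_succ_lt fun n => (hP n).1
      obtain ⟨N, hN⟩ := h2 f hf
      exact absurd hN (not_le.mpr (hP N).2)
  exact ⟨hab, hbc, hcd, hde⟩
end
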